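/- arXiv:1610.09891 — 7 statements merged into one kernel-verified Lean document; each statement's English description precedes it below -/
import Mathlib

section
/- Let d ≥ 1, let T : ℝ^d → [0,∞) be measurable, and let u > 0. Then, as an identity in [0,∞], u ∫_{{T<u}} T(η)^{-1} dη = |{η ∈ ℝ^d : T(η) < u}| + u ∫_0^u s^{-2} |{η ∈ ℝ^d : T(η) < s}| ds. -/
/-!
For `T η < u` one has `u / T η = 1 + u ∫_{T η}^u s⁻² ds`, both sides being `∞` when
`T η ≤ 0` because `∫_0^u s⁻² ds = ∞`. Integrating over `{T < u}` and exchanging the order of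
integration (Tonelli) turns `∫_{T<u} ∫_{T η}^u s⁻² ds dη` into `∫_0^u s⁻² |{T < s}| ds`.
-/

open MeasureTheory Set ENNReal

lemma inv_ofReal_sq_eq_ofReal_rpow_neg_two {s : ℝ} (hs : 0 < s) :
    (ENNReal.ofReal (s ^ 2))⁻¹ = ENNReal.ofReal (s ^ (-2 : ℝ)) := by
  rw [Real.rpow_neg hs.le, Real.rpow_two, ENNReal.ofReal_inv_of_pos (by positivity)]

lemma lintegral_Ioi_inv_sq {t : ℝ} (ht : 0 ≤ t) :
    ∫⁻ s in Ioi t, (ENNReal.ofReal (s ^ 2))⁻¹ = (ENNReal.ofReal t)⁻¹ := by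
  have hpos : ∀ s ∈ Ioi t, 0 < s := fun s hs => ht.trans_lt hs
  rw [setLIntegral_congr_fun measurableSet_Ioi
    fun s hs => inv_ofReal_sq_eq_ofReal_rpow_neg_two (hpos s hs)]
  have hnn : 0 ≤ᵐ[volume.restrict (Ioi t)] fun s : ℝ => s ^ (-2 : ℝ) :=
    (ae_restrict_mem measurableSet_Ioi).mono fun s hs => (Real.rpow_pos_of_pos (hpos s hs) _).le
  rcases ht.eq_or_lt with rfl | ht
  · rw [ENNReal.ofReal_zero, ENNReal.inv_zero, ← not_ne_iff,
      lintegral_ofReal_ne_top_iff_integrable (by fun_prop) hnn]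
    exact not_integrableOn_Ioi_rpow _
  · rw [← ofReal_integral_eq_lintegral_ofReal (integrableOn_Ioi_rpow_of_lt (by norm_num) ht) hnn,
      integral_Ioi_rpow_of_lt (by norm_num) ht, ← ENNReal.ofReal_inv_of_pos ht]
    norm_num [Real.rpow_neg_one]

lemma ofReal_mul_inv_eq_one_add_setLIntegral_inv_sq {t u : ℝ} (hu : 0 < u) (htu : t < u) :
    ENNReal.ofReal u * (ENNReal.ofReal t)⁻¹
      = 1 + ENNReal.ofReal u *
          ∫⁻ s in Ioi t, (ENNReal.ofReal (s ^ 2))⁻¹ ∂volume.restrict (Ioo 0 u) := by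
  have hIoo : Ioi t ∩ Ioo 0 u = Ioo (max t 0) u := by
    rw [← Ioi_inter_Iio, ← inter_assoc, Ioi_inter_Ioi, Ioi_inter_Iio]
  have hsplit : (ENNReal.ofReal (max t 0))⁻¹
      = (∫⁻ s in Ioo (max t 0) u, (ENNReal.ofReal (s ^ 2))⁻¹) + (ENNReal.ofReal u)⁻¹ := by
    rw [← lintegral_Ioi_inv_sq (le_max_right t 0), ← lintegral_Ioi_inv_sq hu.le,
      setLIntegral_congr (Ioi_ae_eq_Ici (a := u)), ← lintegral_union measurableSet_Ici
        ((Iio_disjoint_Ici le_rfl).mono_left Ioo_subset_Iio_self),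
      Ioo_union_Ici_eq_Ioi (max_lt htu hu)]
  rw [Measure.restrict_restrict measurableSet_Ioi, hIoo,
    show ENNReal.ofReal t = ENNReal.ofReal (max t 0) by simp, hsplit,
    mul_add, ENNReal.mul_inv_cancel (by simpa using hu) ofReal_ne_top, add_comm]

section

variable {α : Type*} [MeasurableSpace α] {μ : Measure α} [SFinite μ] {T : α → ℝ}

lemma lintegral_setLIntegral_Ioi_eq_lintegral_mul_measure_lt (hT : Measurable T)
    {g : ℝ → ℝ≥0∞} (hg : Measurable g) (ν : Measure ℝ) [SFinite ν] :
    ∫⁻ x, ∫⁻ s in Ioi (T x), g s ∂ν ∂μ = ∫⁻ s, g s * μ {x | T x < s} ∂ν := by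
  have hindicator : ∀ x s, (Ioi (T x)).indicator g s
      = {p : α × ℝ | T p.1 < p.2}.indicator (fun p => g p.2) (x, s) := fun _ _ => rfl
  have hmeas :
      Measurable fun p : α × ℝ => {p : α × ℝ | T p.1 < p.2}.indicator (fun p => g p.2) p :=
    (hg.comp measurable_snd).indicator (measurableSet_lt (hT.comp measurable_fst) measurable_snd)
  simp_rw [← lintegral_indicator measurableSet_Ioi, hindicator]
  rw [lintegral_lintegral_swap hmeas.aemeasurable]
  refine lintegral_congr fun s => ?_
  rw [← lintegral_indicator_const (measurableSet_lt hT measurable_const)]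
  rfl

theorem setLIntegral_inv_eq_measure_add_lintegral_measure_lt (hT : Measurable T) {u : ℝ}
    (hu : 0 < u) :
    ENNReal.ofReal u * ∫⁻ x in {x | T x < u}, (ENNReal.ofReal (T x))⁻¹ ∂μ
      = μ {x | T x < u}
        + ENNReal.ofReal u *
            ∫⁻ s in Ioo 0 u, (ENNReal.ofReal (s ^ 2))⁻¹ * μ {x | T x < s} := by
  have hsub : ∀ s ∈ Ioo 0 u, μ.restrict {x | T x < u} {x | T x < s} = μ {x | T x < s} := by
    intro s hs
    have hmono : {x | T x < s} ⊆ {x | T x < u} := fun x hx => lt_trans hx hs.2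
    rw [Measure.restrict_apply (measurableSet_lt hT measurable_const), inter_eq_left.mpr hmono]
  have hg : Measurable fun s : ℝ => (ENNReal.ofReal (s ^ 2))⁻¹ := by fun_prop
  rw [← lintegral_const_mul' _ _ ofReal_ne_top,
    setLIntegral_congr_fun (measurableSet_lt hT measurable_const)
      fun x hx => ofReal_mul_inv_eq_one_add_setLIntegral_inv_sq hu hx,
    lintegral_add_left measurable_const, setLIntegral_one, lintegral_const_mul' _ _ ofReal_ne_top,
    lintegral_setLIntegral_Ioi_eq_lintegral_mul_measure_lt hT hg,
    setLIntegral_congr_fun measurableSet_Ioo fun s hs => by rw [hsub s hs]]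

end

theorem G_layer_cake_identity_general
    (d : ℕ)
    (T : EuclideanSpace ℝ (Fin d) → ℝ)
    (hT : Measurable T)
    (u : ℝ) (hu : 0 < u) :
    ENNReal.ofReal u * ∫⁻ η in {η | T η < u}, (ENNReal.ofReal (T η))⁻¹
      = volume {η : EuclideanSpace ℝ (Fin d) | T η < u}
        + ENNReal.ofReal u *
          ∫⁻ s in Set.Ioo (0:ℝ) u,
            (ENNReal.ofReal (s ^ 2))⁻¹ *
              volume {η : EuclideanSpace ℝ (Fin d) | T η < s} :=
  setLIntegral_inv_eq_measure_add_lintegral_measure_lt hT hu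

/-- The layer-cake style identity (in `[0,∞]`):
`u ∫_{{T<u}} T(η)⁻¹ dη = |{T < u}| + u ∫₀ᵘ s⁻² |{T < s}| ds`. -/
theorem G_layer_cake_identity
    (d : ℕ) (hd : 1 ≤ d)
    (T : EuclideanSpace ℝ (Fin d) → ℝ)
    (hT : Measurable T) (hT0 : ∀ η, 0 ≤ T η)
    (u : ℝ) (hu : 0 < u) :
    ENNReal.ofReal u * ∫⁻ η in {η | T η < u}, (ENNReal.ofReal (T η))⁻¹
      = volume {η : EuclideanSpace ℝ (Fin d) | T η < u}
        + ENNReal.ofReal u *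
          ∫⁻ s in Set.Ioo (0:ℝ) u,
            (ENNReal.ofReal (s ^ 2))⁻¹ *
              volume {η : EuclideanSpace ℝ (Fin d) | T η < s} :=
  G_layer_cake_identity_general d T hT u hu
end

section
/- Let d ≥ 3 be an integer, let m ≥ 0 and define T_m(η) := √(|η|² + m²) − m for η ∈ ℝ^d. Then for every u > 0, u ∫_{{η ∈ ℝ^d : T_m(η) < u}} T_m(η)^{-1} dη ≤ (d/(d−2)) |B₁^d| u^{d/2} (u + 2m)^{d/2}, where |B₁^d| denotes the Lebesgue measure of the unit ball in ℝ^d. -/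
open MeasureTheory Set Metric


lemma ball_lintegral_inv_sq (d : ℕ) (hd : 3 ≤ d) (R : ℝ) (hR : 0 < R) :
    ∫⁻ η in Metric.ball (0 : EuclideanSpace ℝ (Fin d)) R,
        ENNReal.ofReal ((‖η‖ ^ 2)⁻¹)
      ≤ ENNReal.ofReal ((d / (d - 2)) * R ^ ((d : ℝ) - 2)) *
          volume (Metric.ball (0 : EuclideanSpace ℝ (Fin d)) 1) := by
  have hd2 : (2:ℝ) < d := by exact_mod_cast lt_of_lt_of_le (by norm_num) hd
  have hd2' : (0:ℝ) < (d:ℝ) - 2 := by linarith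
  have hdim : Module.finrank ℝ (EuclideanSpace ℝ (Fin d)) = d := by
    simp [finrank_euclideanSpace]
  set B := volume (Metric.ball (0 : EuclideanSpace ℝ (Fin d)) 1) with hB
  -- layer cake
  rw [lintegral_eq_lintegral_meas_le _
      (Filter.Eventually.of_forall fun η => by positivity)
      (by fun_prop)]
  -- bound the superlevel measures
  have hlevel : ∀ t ∈ Ioi (0:ℝ),
      (volume.restrict (Metric.ball (0 : EuclideanSpace ℝ (Fin d)) R))
        {a | t ≤ (‖a‖ ^ 2)⁻¹}
      ≤ ENNReal.ofReal ((min R ((Real.sqrt t)⁻¹)) ^ d) * B := by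
    intro t ht
    have ht' : (0:ℝ) < t := ht
    rw [Measure.restrict_apply' measurableSet_ball]
    have hsub : {a : EuclideanSpace ℝ (Fin d) | t ≤ (‖a‖ ^ 2)⁻¹} ∩ Metric.ball 0 R
        ⊆ Metric.closedBall 0 (min R ((Real.sqrt t)⁻¹)) := by
      rintro a ⟨ha, hab⟩
      simp only [Set.mem_setOf_eq] at ha
      rw [mem_ball_zero_iff] at hab
      rw [mem_closedBall_zero_iff, le_min_iff]
      refine ⟨hab.le, ?_⟩
      rcases eq_or_lt_of_le (norm_nonneg a) with h0 | h0
      · rw [← h0]; positivity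
      · have hs : (0:ℝ) < ‖a‖ ^ 2 := by positivity
        have h1 : ‖a‖ ^ 2 ≤ t⁻¹ := (le_inv_comm₀ ht' hs).mp ha
        calc ‖a‖ = Real.sqrt (‖a‖ ^ 2) := (Real.sqrt_sq (norm_nonneg a)).symm
          _ ≤ Real.sqrt t⁻¹ := Real.sqrt_le_sqrt h1
          _ = (Real.sqrt t)⁻¹ := Real.sqrt_inv t
    calc volume ({a : EuclideanSpace ℝ (Fin d) | t ≤ (‖a‖ ^ 2)⁻¹} ∩ Metric.ball 0 R)
        ≤ volume (Metric.closedBall (0 : EuclideanSpace ℝ (Fin d)) (min R ((Real.sqrt t)⁻¹))) :=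
          measure_mono hsub
      _ = _ := by
          rw [Measure.addHaar_closedBall _ _ (le_min hR.le (by positivity)), hdim]
  have hBne : B ≠ ⊤ := measure_ball_lt_top.ne
  calc ∫⁻ t in Ioi (0:ℝ),
        (volume.restrict (Metric.ball (0 : EuclideanSpace ℝ (Fin d)) R)) {a | t ≤ (‖a‖ ^ 2)⁻¹}
      ≤ ∫⁻ t in Ioi (0:ℝ), ENNReal.ofReal ((min R ((Real.sqrt t)⁻¹)) ^ d) * B :=
        setLIntegral_mono' measurableSet_Ioi hlevel
    _ = (∫⁻ t in Ioi (0:ℝ), ENNReal.ofReal ((min R ((Real.sqrt t)⁻¹)) ^ d)) * B :=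
        lintegral_mul_const' B _ hBne
    _ ≤ ENNReal.ofReal ((d / (d - 2)) * R ^ ((d : ℝ) - 2)) * B := by
        refine mul_le_mul_left ?_ B
        set c : ℝ := (R ^ 2)⁻¹ with hc
        have hc0 : (0:ℝ) < c := by positivity
        calc ∫⁻ t in Ioi (0:ℝ), ENNReal.ofReal ((min R ((Real.sqrt t)⁻¹)) ^ d)
            = ∫⁻ t in Ioc (0:ℝ) c ∪ Ioi c, ENNReal.ofReal ((min R ((Real.sqrt t)⁻¹)) ^ d) := by
              rw [Ioc_union_Ioi_eq_Ioi hc0.le]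
          _ ≤ (∫⁻ t in Ioc (0:ℝ) c, ENNReal.ofReal ((min R ((Real.sqrt t)⁻¹)) ^ d))
              + ∫⁻ t in Ioi c, ENNReal.ofReal ((min R ((Real.sqrt t)⁻¹)) ^ d) :=
              lintegral_union_le _ _ _
          _ ≤ ENNReal.ofReal (R ^ ((d:ℝ) - 2))
              + ENNReal.ofReal ((2 / ((d:ℝ) - 2)) * R ^ ((d:ℝ) - 2)) := by
              gcongr
              · -- Ioc part
                calc ∫⁻ t in Ioc (0:ℝ) c, ENNReal.ofReal ((min R ((Real.sqrt t)⁻¹)) ^ d)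
                    ≤ ∫⁻ _ in Ioc (0:ℝ) c, ENNReal.ofReal (R ^ d) := by
                      refine setLIntegral_mono' measurableSet_Ioc fun t ht => ?_
                      exact ENNReal.ofReal_le_ofReal
                        (pow_le_pow_left₀ (le_min hR.le (by positivity)) (min_le_left _ _) d)
                  _ = ENNReal.ofReal (R ^ d) * volume (Ioc (0:ℝ) c) := setLIntegral_const _ _
                  _ = ENNReal.ofReal (R ^ ((d:ℝ) - 2)) := by
                      rw [Real.volume_Ioc, ← ENNReal.ofReal_mul (by positivity)]
                      congr 1
                      rw [← Real.rpow_natCast R d]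
                      rw [show ((d:ℝ) - 2) = (d:ℝ) + (-2) by ring, Real.rpow_add hR]
                      rw [Real.rpow_neg hR.le, Real.rpow_two]
                      ring
              · -- Ioi part
                have ha : (-(d:ℝ)/2) < -1 := by linarith
                calc ∫⁻ t in Ioi c, ENNReal.ofReal ((min R ((Real.sqrt t)⁻¹)) ^ d)
                    ≤ ∫⁻ t in Ioi c, ENNReal.ofReal (t ^ (-(d:ℝ)/2)) := by
                      refine setLIntegral_mono' measurableSet_Ioi fun t ht => ?_
                      have ht0 : (0:ℝ) < t := hc0.trans ht
                      refine ENNReal.ofReal_le_ofReal ?_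
                      have : ((Real.sqrt t)⁻¹) ^ d = t ^ (-(d:ℝ)/2) := by
                        rw [← Real.rpow_natCast ((Real.sqrt t)⁻¹) d,
                          ← Real.rpow_neg_one (Real.sqrt t), Real.sqrt_eq_rpow,
                          ← Real.rpow_mul ht0.le, ← Real.rpow_mul ht0.le]
                        ring_nf
                      rw [← this]
                      exact pow_le_pow_left₀ (le_min hR.le (by positivity))
                        (min_le_right _ _) d
                  _ = ENNReal.ofReal (∫ t in Ioi c, t ^ (-(d:ℝ)/2)) := by
                      rw [ofReal_integral_eq_lintegral_ofReal
                        (integrableOn_Ioi_rpow_of_lt ha hc0)]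
                      filter_upwards [ae_restrict_mem measurableSet_Ioi] with t ht
                      exact Real.rpow_nonneg (hc0.trans ht).le _
                  _ = ENNReal.ofReal ((2 / ((d:ℝ) - 2)) * R ^ ((d:ℝ) - 2)) := by
                      rw [integral_Ioi_rpow_of_lt ha hc0]
                      congr 1
                      have hkey : c ^ (-(d:ℝ)/2 + 1) = R ^ ((d:ℝ) - 2) := by
                        rw [hc, ← Real.rpow_two, ← Real.rpow_neg hR.le,
                          ← Real.rpow_mul hR.le]
                        congr 1
                        ring
                      have hA : -(d:ℝ)/2 + 1 = -(((d:ℝ)-2)/2) := by ring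
                      rw [hkey, hA, div_neg, neg_div, neg_neg, div_div_eq_mul_div]
                      ring
          _ = ENNReal.ofReal ((d / (d - 2)) * R ^ ((d : ℝ) - 2)) := by
              rw [← ENNReal.ofReal_add (by positivity) (by positivity)]
              congr 1
              field_simp
              ring


/-- For `d ≥ 3`, `m ≥ 0` and the pseudo-relativistic symbol
`T_m(η) = √(|η|² + m²) − m`, one has for every `u > 0`:
`u ∫_{{T_m<u}} T_m(η)⁻¹ dη ≤ (d/(d-2)) |B₁^d| u^{d/2} (u+2m)^{d/2}`. -/
theorem relativistic_G_bound
    (d : ℕ) (hd : 3 ≤ d)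
    (m : ℝ) (hm : 0 ≤ m)
    (u : ℝ) (hu : 0 < u) :
    ENNReal.ofReal u *
        ∫⁻ η in {η : EuclideanSpace ℝ (Fin d) |
            Real.sqrt (‖η‖ ^ 2 + m ^ 2) - m < u},
          (ENNReal.ofReal (Real.sqrt (‖η‖ ^ 2 + m ^ 2) - m))⁻¹
      ≤ ENNReal.ofReal ((d / (d - 2)) * (u ^ ((d : ℝ) / 2) * (u + 2 * m) ^ ((d : ℝ) / 2))) *
          volume (Metric.ball (0 : EuclideanSpace ℝ (Fin d)) 1) := by
  have hd2 : (2:ℝ) < d := by exact_mod_cast lt_of_lt_of_le (by norm_num) hd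
  have h2m : (0:ℝ) < u + 2 * m := by linarith
  have hx : (0:ℝ) < u * (u + 2 * m) := by positivity
  set R : ℝ := Real.sqrt (u * (u + 2 * m)) with hRdef
  have hR : 0 < R := Real.sqrt_pos.mpr hx
  set B := volume (Metric.ball (0 : EuclideanSpace ℝ (Fin d)) 1) with hB
  -- the sublevel set is a ball
  have hset : {η : EuclideanSpace ℝ (Fin d) | Real.sqrt (‖η‖ ^ 2 + m ^ 2) - m < u}
      = Metric.ball (0 : EuclideanSpace ℝ (Fin d)) R := by
    ext η
    simp only [Set.mem_setOf_eq, mem_ball_zero_iff]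
    rw [sub_lt_iff_lt_add, Real.sqrt_lt' (by linarith : (0:ℝ) < u + m), hRdef,
      Real.lt_sqrt (norm_nonneg η)]
    constructor <;> intro h <;> nlinarith
  -- pointwise bound on the ball (a.e., away from the origin)
  have key : (∫⁻ η in Metric.ball (0 : EuclideanSpace ℝ (Fin d)) R,
        (ENNReal.ofReal (Real.sqrt (‖η‖ ^ 2 + m ^ 2) - m))⁻¹)
      ≤ ENNReal.ofReal (u + 2 * m) *
          ∫⁻ η in Metric.ball (0 : EuclideanSpace ℝ (Fin d)) R,
            ENNReal.ofReal ((‖η‖ ^ 2)⁻¹) := by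
    rw [← lintegral_const_mul' (ENNReal.ofReal (u + 2 * m)) _ ENNReal.ofReal_ne_top]
    refine lintegral_mono_ae ?_
    have h0 : ∀ᵐ η ∂(volume.restrict (Metric.ball (0 : EuclideanSpace ℝ (Fin d)) R)),
        η ≠ 0 := by
      haveI : Nonempty (Fin d) := ⟨⟨0, by omega⟩⟩
      haveI : Nontrivial (EuclideanSpace ℝ (Fin d)) := inferInstance
      refine ae_iff.mpr ?_
      have hs0 : {η : EuclideanSpace ℝ (Fin d) | ¬ η ≠ 0} = {0} := by ext; simp
      rw [hs0, Measure.restrict_apply' measurableSet_ball]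
      exact measure_mono_null Set.inter_subset_left (measure_singleton 0)
    filter_upwards [ae_restrict_mem measurableSet_ball, h0] with η hball hne
    have hn : (0:ℝ) < ‖η‖ := norm_pos_iff.mpr hne
    have hs : (0:ℝ) < ‖η‖ ^ 2 := by positivity
    have hsq : Real.sqrt (‖η‖ ^ 2 + m ^ 2) ^ 2 = ‖η‖ ^ 2 + m ^ 2 :=
      Real.sq_sqrt (by positivity)
    have hmle : m ≤ Real.sqrt (‖η‖ ^ 2 + m ^ 2) := by
      nlinarith [Real.sqrt_nonneg (‖η‖ ^ 2 + m ^ 2)]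
    have hub : Real.sqrt (‖η‖ ^ 2 + m ^ 2) ≤ u + m := by
      rw [show u + m = Real.sqrt ((u + m) ^ 2) from (Real.sqrt_sq (by linarith)).symm]
      apply Real.sqrt_le_sqrt
      rw [mem_ball_zero_iff, hRdef, Real.lt_sqrt (norm_nonneg η)] at hball
      nlinarith
    have hTle : ‖η‖ ^ 2 / (u + 2 * m) ≤ Real.sqrt (‖η‖ ^ 2 + m ^ 2) - m := by
      rw [div_le_iff₀ h2m]
      nlinarith [mul_nonneg (sub_nonneg.mpr hmle)
        (by linarith : (0:ℝ) ≤ u + 2 * m - (Real.sqrt (‖η‖ ^ 2 + m ^ 2) + m))]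
    have hTpos : (0:ℝ) < ‖η‖ ^ 2 / (u + 2 * m) := by positivity
    calc (ENNReal.ofReal (Real.sqrt (‖η‖ ^ 2 + m ^ 2) - m))⁻¹
        ≤ (ENNReal.ofReal (‖η‖ ^ 2 / (u + 2 * m)))⁻¹ :=
          ENNReal.inv_le_inv.mpr (ENNReal.ofReal_le_ofReal hTle)
      _ = ENNReal.ofReal ((‖η‖ ^ 2 / (u + 2 * m))⁻¹) :=
          (ENNReal.ofReal_inv_of_pos hTpos).symm
      _ = ENNReal.ofReal ((u + 2 * m) * (‖η‖ ^ 2)⁻¹) := by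
          congr 1
          rw [division_def, mul_inv, inv_inv, mul_comm]
      _ = ENNReal.ofReal (u + 2 * m) * ENNReal.ofReal ((‖η‖ ^ 2)⁻¹) :=
          ENNReal.ofReal_mul h2m.le
  -- real-number bookkeeping for the constants
  have hRpow : R ^ ((d:ℝ) - 2) = (u * (u + 2 * m)) ^ (((d:ℝ) - 2) / 2) := by
    rw [hRdef, Real.sqrt_eq_rpow, ← Real.rpow_mul hx.le]
    congr 1
    ring
  have hfinal : u * ((u + 2 * m) * ((d / ((d:ℝ) - 2)) * R ^ ((d:ℝ) - 2)))
      = (d / ((d:ℝ) - 2)) * (u ^ ((d:ℝ) / 2) * (u + 2 * m) ^ ((d:ℝ) / 2)) := by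
    rw [hRpow, ← Real.mul_rpow hu.le h2m.le,
      show ((d:ℝ) / 2) = 1 + ((d:ℝ) - 2) / 2 by ring,
      Real.rpow_add hx, Real.rpow_one]
    ring
  calc ENNReal.ofReal u *
        ∫⁻ η in {η : EuclideanSpace ℝ (Fin d) |
            Real.sqrt (‖η‖ ^ 2 + m ^ 2) - m < u},
          (ENNReal.ofReal (Real.sqrt (‖η‖ ^ 2 + m ^ 2) - m))⁻¹
      = ENNReal.ofReal u *
        ∫⁻ η in Metric.ball (0 : EuclideanSpace ℝ (Fin d)) R,
          (ENNReal.ofReal (Real.sqrt (‖η‖ ^ 2 + m ^ 2) - m))⁻¹ := by rw [hset]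
    _ ≤ ENNReal.ofReal u * (ENNReal.ofReal (u + 2 * m) *
        ∫⁻ η in Metric.ball (0 : EuclideanSpace ℝ (Fin d)) R,
          ENNReal.ofReal ((‖η‖ ^ 2)⁻¹)) := mul_le_mul_right key _
    _ ≤ ENNReal.ofReal u * (ENNReal.ofReal (u + 2 * m) *
        (ENNReal.ofReal ((d / ((d:ℝ) - 2)) * R ^ ((d:ℝ) - 2)) * B)) := by
        gcongr
        exact ball_lintegral_inv_sq d hd R hR
    _ = ENNReal.ofReal (u * ((u + 2 * m) * ((d / ((d:ℝ) - 2)) * R ^ ((d:ℝ) - 2)))) * B := by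
        rw [ENNReal.ofReal_mul hu.le, ENNReal.ofReal_mul h2m.le, mul_assoc, mul_assoc]
    _ = ENNReal.ofReal ((d / ((d:ℝ) - 2)) * (u ^ ((d:ℝ) / 2) * (u + 2 * m) ^ ((d:ℝ) / 2))) * B := by
        rw [hfinal]
end

section
/- Let d ≥ 1 be an integer, P ∈ ℝ^d, M > 0, and μ₊, μ₋ ∈ (0,1) with μ₊ + μ₋ = 1. Define the relativistic pair kinetic symbol T_{P,M,μ±}(η) := √(|μ₊P − η|² + μ₊²M²) + √(|μ₋P + η|² + μ₋²M²) − √(|P|² + M²), and set g := √(|P|² + M²) and μ̃ := (μ₋ − μ₊)/2. Then for every u > 0 the Lebesgue measure of the sublevel set satisfies |{η ∈ ℝ^d : T_{P,M,μ±}(η) < u}| = (|B₁^d|/2^d) · u^{d/2} (u + g) (u + 2g)^{d/2} (u² + 2gu + (1 − 4μ̃²)M²)^{d/2} / (u² + 2gu + M²)^{(d+1)/2}, where |B₁^d| denotes the Lebesgue measure of the unit ball in ℝ^d. -/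
open MeasureTheory
open scoped RealInnerProductSpace Pointwise

lemma mink {E : Type*} [NormedAddCommGroup E] [InnerProductSpace ℝ E] (v w : E) (a b : ℝ) :
    Real.sqrt (‖v + w‖ ^ 2 + (a + b) ^ 2)
      ≤ Real.sqrt (‖v‖ ^ 2 + a ^ 2) + Real.sqrt (‖w‖ ^ 2 + b ^ 2) := by
  have hA : (0:ℝ) ≤ ‖v‖ ^ 2 + a ^ 2 := by positivity
  have hB : (0:ℝ) ≤ ‖w‖ ^ 2 + b ^ 2 := by positivity
  have hcs := real_inner_le_norm v w
  have hprod : Real.sqrt (‖v‖ ^ 2 + a ^ 2) * Real.sqrt (‖w‖ ^ 2 + b ^ 2)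
      = Real.sqrt ((‖v‖ ^ 2 + a ^ 2) * (‖w‖ ^ 2 + b ^ 2)) := (Real.sqrt_mul hA _).symm
  have habs : |a| * |b| = |a * b| := (abs_mul a b).symm
  have hkey : ⟪v, w⟫ + a * b ≤ Real.sqrt ((‖v‖ ^ 2 + a ^ 2) * (‖w‖ ^ 2 + b ^ 2)) := by
    have h1 : ‖v‖ * ‖w‖ + |a * b| ≤ Real.sqrt ((‖v‖ ^ 2 + a ^ 2) * (‖w‖ ^ 2 + b ^ 2)) := by
      rw [show (‖v‖ ^ 2 + a ^ 2) * (‖w‖ ^ 2 + b ^ 2)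
          = (‖v‖ * ‖w‖ + |a * b|) ^ 2 +
            ((|a| * ‖w‖ - |b| * ‖v‖) ^ 2) by
        rw [← habs]; nlinarith [sq_abs a, sq_abs b] ]
      calc ‖v‖ * ‖w‖ + |a * b| = Real.sqrt ((‖v‖ * ‖w‖ + |a * b|) ^ 2) := by
            rw [Real.sqrt_sq (by positivity)]
        _ ≤ _ := Real.sqrt_le_sqrt (by nlinarith [sq_nonneg (|a| * ‖w‖ - |b| * ‖v‖)])
    have h2 : a * b ≤ |a * b| := le_abs_self _
    nlinarith [hcs, h2, h1]
  rw [← Real.sqrt_sq (by positivity : (0:ℝ) ≤ Real.sqrt (‖v‖ ^ 2 + a ^ 2) + Real.sqrt (‖w‖ ^ 2 + b ^ 2))]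
  apply Real.sqrt_le_sqrt
  have e1 := Real.sq_sqrt hA
  have e2 := Real.sq_sqrt hB
  have hexp : ‖v + w‖ ^ 2 = ‖v‖ ^ 2 + 2 * ⟪v, w⟫ + ‖w‖ ^ 2 := norm_add_sq_real v w
  nlinarith [hkey, hprod, e1, e2]

lemma sqrt_lt_iff_quartic {A B c : ℝ} (hA : 0 ≤ A) (hB : 0 ≤ B) (hc : 0 < c)
    (hdiff : (Real.sqrt A - Real.sqrt B) ^ 2 < c ^ 2) :
    (Real.sqrt A + Real.sqrt B < c ↔ 0 < c ^ 4 - 2 * c ^ 2 * (A + B) + (A - B) ^ 2) := by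
  set p := Real.sqrt A with hpdef
  set q := Real.sqrt B with hqdef
  have hp : p ^ 2 = A := Real.sq_sqrt hA
  have hq : q ^ 2 = B := Real.sq_sqrt hB
  have hp0 : 0 ≤ p := Real.sqrt_nonneg _
  have hq0 : 0 ≤ q := Real.sqrt_nonneg _
  have hfact : c ^ 4 - 2 * c ^ 2 * (A + B) + (A - B) ^ 2
      = (c ^ 2 - (p + q) ^ 2) * (c ^ 2 - (p - q) ^ 2) := by rw [← hp, ← hq]; ring
  rw [hfact]
  have h2 : 0 < c ^ 2 - (p - q) ^ 2 := by linarith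
  constructor
  · intro h
    have h1 : 0 < c ^ 2 - (p + q) ^ 2 := by nlinarith
    exact mul_pos h1 h2
  · intro h
    have h1 : 0 < c ^ 2 - (p + q) ^ 2 := by
      rcases mul_pos_iff.mp h with ⟨h1, _⟩ | ⟨_, h2'⟩
      · exact h1
      · linarith
    nlinarith [hp0, hq0, hc, h1]

lemma det_aux (d : ℕ) (P : EuclideanSpace ℝ (Fin d)) (a b : ℝ) (ha : a ≠ 0) :
    LinearMap.det
      ((a • LinearMap.id + b • ((innerSL ℝ P).toLinearMap.smulRight P)) :
        EuclideanSpace ℝ (Fin d) →ₗ[ℝ] EuclideanSpace ℝ (Fin d))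
      = a ^ d * (1 + (b / a) * ‖P‖ ^ 2) := by
  classical
  set L : EuclideanSpace ℝ (Fin d) →ₗ[ℝ] EuclideanSpace ℝ (Fin d) :=
    a • LinearMap.id + b • ((innerSL ℝ P).toLinearMap.smulRight P) with hL
  have hLapp : ∀ x, L x = a • x + (b * ⟪P, x⟫) • P := by
    intro x
    simp [hL, LinearMap.smulRight_apply, innerSL_apply_apply, smul_smul]
  set bs := (EuclideanSpace.basisFun (Fin d) ℝ).toBasis with hbs
  rw [← LinearMap.det_toMatrix bs]
  have hmat : LinearMap.toMatrix bs bs L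
      = a • (1 + Matrix.replicateCol Unit ((b / a) • (P : Fin d → ℝ)) * Matrix.replicateRow Unit (P : Fin d → ℝ)) := by
    ext i j
    rw [LinearMap.toMatrix_apply]
    simp [hLapp, hbs, EuclideanSpace.basisFun_apply, Matrix.replicateCol, Matrix.replicateRow, Matrix.one_apply,
      EuclideanSpace.inner_single_right, PiLp.smul_apply, EuclideanSpace.single_apply,
      Matrix.mul_apply, mul_comm, mul_assoc, mul_left_comm]
    split <;> field_simp <;> ring
  rw [hmat, Matrix.det_smul, Matrix.det_one_add_replicateCol_mul_replicateRow]
  have : dotProduct (P : Fin d → ℝ) ((b / a) • (P : Fin d → ℝ)) = (b / a) * ‖P‖ ^ 2 := by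
    have h1 : ∑ x, P x * ((b / a) • (P : Fin d → ℝ)) x = (b / a) * ⟪P, P⟫ := by
      simp only [PiLp.inner_apply, RCLike.inner_apply, conj_trivial, Pi.smul_apply, PiLp.smul_apply, smul_eq_mul,
        Finset.mul_sum]
      congr 1; ext i; ring
    rw [dotProduct, h1, real_inner_self_eq_norm_sq]
  rw [this]
  simp [Fintype.card_fin]

set_option maxHeartbeats 2000000 in
/-- Classical phase volume of the relativistic pair symbol
`T_{P,M,μ±}(η) = √(|μ₊P − η|² + μ₊²M²) + √(|μ₋P + η|² + μ₋²M²) − √(|P|² + M²)`: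
with `g = √(|P|² + M²)` and `μ̃ = (μ₋ − μ₊)/2`, for every `u > 0`,
`|{T_{P,M,μ±} < u}| = (|B₁^d|/2^d) u^{d/2}(u+g)(u+2g)^{d/2}
  (u²+2gu+(1−4μ̃²)M²)^{d/2} / (u²+2gu+M²)^{(d+1)/2}`. -/
theorem relativistic_pair_sublevel_volume
    (d : ℕ) (hd : 1 ≤ d)
    (P : EuclideanSpace ℝ (Fin d)) (M : ℝ) (hM : 0 < M)
    (μp μm : ℝ) (hμp : μp ∈ Set.Ioo (0:ℝ) 1) (hμm : μm ∈ Set.Ioo (0:ℝ) 1)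
    (hsum : μp + μm = 1)
    (g μt : ℝ) (hg : g = Real.sqrt (‖P‖ ^ 2 + M ^ 2)) (hμt : μt = (μm - μp) / 2)
    (u : ℝ) (hu : 0 < u) :
    volume {η : EuclideanSpace ℝ (Fin d) |
        Real.sqrt (‖μp • P - η‖ ^ 2 + μp ^ 2 * M ^ 2)
          + Real.sqrt (‖μm • P + η‖ ^ 2 + μm ^ 2 * M ^ 2)
          - Real.sqrt (‖P‖ ^ 2 + M ^ 2) < u}
      = volume (Metric.ball (0 : EuclideanSpace ℝ (Fin d)) 1) *
          ENNReal.ofReal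
            ((u ^ ((d : ℝ) / 2) * (u + g) * (u + 2 * g) ^ ((d : ℝ) / 2)
                * (u ^ 2 + 2 * g * u + (1 - 4 * μt ^ 2) * M ^ 2) ^ ((d : ℝ) / 2))
              / (2 ^ d * (u ^ 2 + 2 * g * u + M ^ 2) ^ (((d : ℝ) + 1) / 2))) := by
  classical
  obtain ⟨hμp0, hμp1⟩ := hμp
  obtain ⟨hμm0, hμm1⟩ := hμm
  have hPM : (0:ℝ) ≤ ‖P‖ ^ 2 + M ^ 2 := by positivity
  have hg2 : g ^ 2 = ‖P‖ ^ 2 + M ^ 2 := by rw [hg]; exact Real.sq_sqrt hPM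
  have hgnn : 0 ≤ g := hg ▸ Real.sqrt_nonneg _
  have hg0 : 0 < g := by nlinarith [sq_nonneg ‖P‖]
  set c := u + g with hc
  have hcpos : 0 < c := by rw [hc]; linarith
  set Y := u ^ 2 + 2 * g * u + M ^ 2 with hY
  set X := u ^ 2 + 2 * g * u + (1 - 4 * μt ^ 2) * M ^ 2 with hX
  have hYpos : 0 < Y := by rw [hY]; nlinarith only [mul_pos hg0 hu, sq_nonneg u, mul_pos hM hM, hM]
  have hμ4 : 1 - 4 * μt ^ 2 = 4 * (μp * μm) := by
    rw [hμt]; linear_combination (-(1 + μp + μm)) * hsum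
  have hXpos : 0 < X := by
    rw [hX, hμ4]; nlinarith only [mul_pos (mul_pos hμp0 hμm0) (mul_pos hM hM), mul_pos hg0 hu, sq_nonneg u]
  set b2 := u * (u + 2 * g) / 4 with hb2
  have hb2pos : 0 < b2 := by rw [hb2]; nlinarith only [mul_pos hg0 hu, mul_pos hu hu]
  set rh := b2 * (1 - 4 * μt ^ 2) with hrh
  set w := μt * (g ^ 2 - c ^ 2) with hw
  set R := b2 * X / Y with hR
  have hRpos : 0 < R := by rw [hR]; exact div_pos (mul_pos hb2pos hXpos) hYpos
  set sR := Real.sqrt R with hsR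
  set sY := Real.sqrt Y with hsY
  have hsR2 : sR ^ 2 = R := Real.sq_sqrt hRpos.le
  have hsY2 : sY ^ 2 = Y := Real.sq_sqrt hYpos.le
  have hsRpos : 0 < sR := Real.sqrt_pos.mpr hRpos
  have hsYpos : 0 < sY := Real.sqrt_pos.mpr hYpos
  have hsYne : sY ≠ 0 := ne_of_gt hsYpos
  have hcsYne : c + sY ≠ 0 := ne_of_gt (add_pos hcpos hsYpos)
  have hP2 : ‖P‖ ^ 2 = c ^ 2 - Y := by rw [hc, hY]; linear_combination (-1) * hg2
  have hRR : rh * Y + w ^ 2 = b2 * X := by rw [hrh, hw, hY, hX, hb2, hc]; ring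
  -- Step 1: rewrite the sublevel set as a quadratic sublevel set
  have hset : {η : EuclideanSpace ℝ (Fin d) |
        Real.sqrt (‖μp • P - η‖ ^ 2 + μp ^ 2 * M ^ 2)
          + Real.sqrt (‖μm • P + η‖ ^ 2 + μm ^ 2 * M ^ 2)
          - Real.sqrt (‖P‖ ^ 2 + M ^ 2) < u}
      = {η : EuclideanSpace ℝ (Fin d) |
            ‖η‖ ^ 2 * c ^ 2 - (⟪P, η⟫ + w) ^ 2 < rh * c ^ 2} := by
    ext η
    simp only [Set.mem_setOf_eq]
    rw [← hg, sub_lt_iff_lt_add, ← hc]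
    have hA0 : (0:ℝ) ≤ ‖μp • P - η‖ ^ 2 + μp ^ 2 * M ^ 2 := by positivity
    have hB0 : (0:ℝ) ≤ ‖μm • P + η‖ ^ 2 + μm ^ 2 * M ^ 2 := by positivity
    have hvec1 : μp • P - η = P + -(μm • P + η) := by
      match_scalars <;> linarith only [hsum]
    have hvec2 : μm • P + η = P + -(μp • P - η) := by
      match_scalars <;> linarith only [hsum]
    have hm1 : Real.sqrt (‖μp • P - η‖ ^ 2 + μp ^ 2 * M ^ 2)
        ≤ g + Real.sqrt (‖μm • P + η‖ ^ 2 + μm ^ 2 * M ^ 2) := by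
      have h := mink P (-(μm • P + η)) M (-(μm * M))
      rw [← hvec1, norm_neg, show M + -(μm * M) = μp * M by linear_combination (-M) * hsum, ← hg] at h
      rw [show μp ^ 2 * M ^ 2 = (μp * M) ^ 2 by ring,
        show μm ^ 2 * M ^ 2 = (-(μm * M)) ^ 2 by ring]
      exact h
    have hm2 : Real.sqrt (‖μm • P + η‖ ^ 2 + μm ^ 2 * M ^ 2)
        ≤ g + Real.sqrt (‖μp • P - η‖ ^ 2 + μp ^ 2 * M ^ 2) := by
      have h := mink P (-(μp • P - η)) M (-(μp * M))
      rw [← hvec2, norm_neg, show M + -(μp * M) = μm * M by linear_combination (-M) * hsum, ← hg] at h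
      rw [show μm ^ 2 * M ^ 2 = (μm * M) ^ 2 by ring,
        show μp ^ 2 * M ^ 2 = (-(μp * M)) ^ 2 by ring]
      exact h
    have hdiff : (Real.sqrt (‖μp • P - η‖ ^ 2 + μp ^ 2 * M ^ 2)
        - Real.sqrt (‖μm • P + η‖ ^ 2 + μm ^ 2 * M ^ 2)) ^ 2 < c ^ 2 := by
      rw [hc]
      have hsq : (Real.sqrt (‖μp • P - η‖ ^ 2 + μp ^ 2 * M ^ 2)
          - Real.sqrt (‖μm • P + η‖ ^ 2 + μm ^ 2 * M ^ 2)) ^ 2 ≤ g ^ 2 :=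
        sq_le_sq' (by linarith only [hm2]) (by linarith only [hm1])
      have hgu : g ^ 2 < (u + g) ^ 2 := by nlinarith only [hu, hg0, mul_pos hu hg0, mul_pos hu hu]
      linarith only [hsq, hgu]
    rw [sqrt_lt_iff_quartic hA0 hB0 hcpos hdiff]
    have hAe : ‖μp • P - η‖ ^ 2 + μp ^ 2 * M ^ 2
        = μp ^ 2 * g ^ 2 - 2 * μp * ⟪P, η⟫ + ‖η‖ ^ 2 := by
      rw [norm_sub_sq_real, norm_smul, real_inner_smul_left, Real.norm_eq_abs, mul_pow, sq_abs]
      linear_combination (-(μp ^ 2)) * hg2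
    have hBe : ‖μm • P + η‖ ^ 2 + μm ^ 2 * M ^ 2
        = μm ^ 2 * g ^ 2 + 2 * μm * ⟪P, η⟫ + ‖η‖ ^ 2 := by
      rw [norm_add_sq_real, norm_smul, real_inner_smul_left, Real.norm_eq_abs, mul_pow, sq_abs]
      linear_combination (-(μm ^ 2)) * hg2
    rw [hAe, hBe]
    have hμm' : μm = 1 - μp := by linarith only [hsum]
    have hiden : c ^ 4
          - 2 * c ^ 2 * ((μp ^ 2 * g ^ 2 - 2 * μp * ⟪P, η⟫ + ‖η‖ ^ 2)
              + (μm ^ 2 * g ^ 2 + 2 * μm * ⟪P, η⟫ + ‖η‖ ^ 2))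
          + ((μp ^ 2 * g ^ 2 - 2 * μp * ⟪P, η⟫ + ‖η‖ ^ 2)
              - (μm ^ 2 * g ^ 2 + 2 * μm * ⟪P, η⟫ + ‖η‖ ^ 2)) ^ 2
        = 4 * (rh * c ^ 2 - (‖η‖ ^ 2 * c ^ 2 - (⟪P, η⟫ + w) ^ 2)) := by
      rw [hrh, hw, hb2, hμt, hμm', hc]; ring
    rw [hiden]
    constructor <;> intro h <;> linarith only [h]
  -- Step 2: the quadratic sublevel set is the image of a ball under an affine map
  set κ := sR / (sY * (c + sY)) with hκ
  set x₀ : EuclideanSpace ℝ (Fin d) := (w / Y) • P with hx₀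
  set L : EuclideanSpace ℝ (Fin d) →ₗ[ℝ] EuclideanSpace ℝ (Fin d) :=
    sR • LinearMap.id + κ • ((innerSL ℝ P).toLinearMap.smulRight P) with hL
  have hLapp : ∀ x, L x = sR • x + (κ * ⟪P, x⟫) • P := by
    intro x
    simp [hL, LinearMap.smulRight_apply, innerSL_apply_apply, smul_smul]
  have hC : ∀ x : EuclideanSpace ℝ (Fin d),
      ‖x₀ + L x‖ ^ 2 * c ^ 2 - (⟪P, x₀ + L x⟫ + w) ^ 2
        = c ^ 2 * (sR ^ 2 * ‖x‖ ^ 2) - c ^ 2 * w ^ 2 / Y := by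
    intro x
    have hip : ⟪P, x₀ + L x⟫
        = (w / Y) * ‖P‖ ^ 2 + (sR * ⟪P, x⟫ + κ * ⟪P, x⟫ * ‖P‖ ^ 2) := by
      simp only [hLapp x, hx₀, inner_add_right, real_inner_smul_right,
        real_inner_self_eq_norm_sq]
    have hnorm2 : ‖x₀ + L x‖ ^ 2
        = (w / Y) ^ 2 * ‖P‖ ^ 2
          + 2 * ((w / Y) * (sR * ⟪P, x⟫ + κ * ⟪P, x⟫ * ‖P‖ ^ 2))
          + (sR ^ 2 * ‖x‖ ^ 2 + 2 * (sR * (κ * ⟪P, x⟫) * ⟪P, x⟫)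
              + (κ * ⟪P, x⟫) ^ 2 * ‖P‖ ^ 2) := by
      rw [norm_add_sq_real, hLapp x, norm_add_sq_real (sR • x)]
      simp only [hx₀, norm_smul, inner_add_right, real_inner_smul_left, real_inner_smul_right,
        real_inner_self_eq_norm_sq, Real.norm_eq_abs, mul_pow, sq_abs, real_inner_comm x P]
      ring
    rw [hip, hnorm2, hP2, ← hsY2, hκ]
    field_simp
    ring
  have hLn : ∀ x, ‖L x‖ ^ 2 = sR ^ 2 * ‖x‖ ^ 2 + (sR ^ 2 / sY ^ 2) * ⟪P, x⟫ ^ 2 := by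
    intro x
    rw [hLapp x, norm_add_sq_real]
    simp only [norm_smul, real_inner_smul_left, real_inner_smul_right,
      real_inner_self_eq_norm_sq, mul_pow, sq_abs, Real.norm_eq_abs]
    rw [real_inner_comm x P, hP2, ← hsY2, hκ]
    field_simp
    ring
  have hLinj : Function.Injective L := by
    intro x y hxy
    have h0 : L (x - y) = 0 := by rw [map_sub, hxy, sub_self]
    have h1 := hLn (x - y)
    rw [h0, norm_zero] at h1
    have h1' : (0:ℝ) = sR ^ 2 * ‖x - y‖ ^ 2 + sR ^ 2 / sY ^ 2 * ⟪P, x - y⟫ ^ 2 := by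
      linear_combination h1
    have hsq0 : ‖x - y‖ ^ 2 ≤ 0 := by
      nlinarith only [h1',
        mul_nonneg (div_nonneg (sq_nonneg sR) (sq_nonneg sY)) (sq_nonneg ⟪P, x - y⟫),
        mul_pos hsRpos hsRpos]
    have hsq1 : ‖x - y‖ ^ 2 = 0 := le_antisymm hsq0 (sq_nonneg _)
    exact sub_eq_zero.mp (norm_eq_zero.mp ((pow_eq_zero_iff two_ne_zero).mp hsq1))
  have hLsurj := LinearMap.injective_iff_surjective.mp hLinj
  have hRkey : rh * c ^ 2 = c ^ 2 * sR ^ 2 - c ^ 2 * w ^ 2 / Y := by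
    rw [hsR2, hR]
    field_simp
    linear_combination c ^ 2 * hRR
  have himage : {η : EuclideanSpace ℝ (Fin d) |
        ‖η‖ ^ 2 * c ^ 2 - (⟪P, η⟫ + w) ^ 2 < rh * c ^ 2}
      = (fun x => x₀ + L x) '' Metric.ball 0 1 := by
    ext η
    simp only [Set.mem_setOf_eq, Set.mem_image, Metric.mem_ball, dist_zero_right]
    constructor
    · intro hη
      obtain ⟨x, hx⟩ := hLsurj (η - x₀)
      have hxeq : x₀ + L x = η := by rw [hx]; abel
      refine ⟨x, ?_, hxeq⟩
      have h1 := hC x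
      rw [hxeq] at h1
      rw [h1, hRkey] at hη
      have h2 : c ^ 2 * (sR ^ 2 * ‖x‖ ^ 2) < c ^ 2 * sR ^ 2 := (sub_lt_sub_iff_right _).mp hη
      have h3 : sR ^ 2 * ‖x‖ ^ 2 < sR ^ 2 := lt_of_mul_lt_mul_left h2 (by positivity)
      have h4 : ‖x‖ ^ 2 < 1 :=
        lt_of_mul_lt_mul_left (a := sR ^ 2) (by rw [mul_one]; exact h3) (sq_nonneg sR)
      exact lt_of_pow_lt_pow_left₀ 2 zero_le_one (by simpa using h4)
    · rintro ⟨x, hx1, rfl⟩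
      rw [hC x, hRkey]
      have hn2 : ‖x‖ ^ 2 < 1 := by nlinarith only [hx1, norm_nonneg x]
      have h2 : sR ^ 2 * ‖x‖ ^ 2 < sR ^ 2 := by
        nlinarith only [hn2, mul_pos hsRpos hsRpos]
      exact sub_lt_sub_right (mul_lt_mul_of_pos_left h2 (pow_pos hcpos 2)) _
  -- Step 3: determinant
  have hdet : LinearMap.det L = sR ^ d * (c / sY) := by
    rw [hL, det_aux d P sR κ (ne_of_gt hsRpos)]
    congr 1
    rw [hκ, hP2, ← hsY2]
    field_simp
    ring
  -- Step 4: volume of the image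
  have himg_vol : volume ((fun x => x₀ + L x) '' Metric.ball 0 1)
      = ENNReal.ofReal (sR ^ d * (c / sY))
          * volume (Metric.ball (0 : EuclideanSpace ℝ (Fin d)) 1) := by
    have himg : (fun x => x₀ + L x) '' Metric.ball 0 1
        = x₀ +ᵥ (⇑L '' Metric.ball 0 1) := by
      rw [← Set.image_vadd, ← Set.image_image]
      rfl
    rw [himg, measure_vadd, Measure.addHaar_image_linearMap, hdet,
      abs_of_pos (mul_pos (pow_pos hsRpos d) (div_pos hcpos hsYpos))]
  -- Step 5: the scalar identity
  have hscal : sR ^ d * (c / sY)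
      = u ^ ((d : ℝ) / 2) * c * (u + 2 * g) ^ ((d : ℝ) / 2) * X ^ ((d : ℝ) / 2)
          / (2 ^ d * Y ^ (((d : ℝ) + 1) / 2)) := by
    have h2g : (0:ℝ) ≤ u + 2 * g := by linarith only [hu, hg0]
    have e1 : sR ^ d = R ^ ((d : ℝ) / 2) := by
      rw [hsR, Real.sqrt_eq_rpow, ← Real.rpow_natCast (R ^ ((1:ℝ) / 2)) d,
        ← Real.rpow_mul hRpos.le]
      congr 1
      ring
    have eR : R = u * (u + 2 * g) * X / (4 * Y) := by
      rw [hR, hb2]; rw [div_mul_eq_mul_div, div_div, mul_comm (4:ℝ) Y, ← div_div]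
    have e2 : R ^ ((d : ℝ) / 2)
        = u ^ ((d : ℝ) / 2) * (u + 2 * g) ^ ((d : ℝ) / 2) * X ^ ((d : ℝ) / 2)
          / ((4:ℝ) ^ ((d : ℝ) / 2) * Y ^ ((d : ℝ) / 2)) := by
      rw [eR, Real.div_rpow (by positivity) (by positivity),
        Real.mul_rpow (mul_nonneg hu.le h2g) hXpos.le,
        Real.mul_rpow hu.le h2g,
        Real.mul_rpow (by norm_num) hYpos.le]
    have e4 : (4:ℝ) ^ ((d : ℝ) / 2) = 2 ^ d := by
      have h42 : (4:ℝ) = (2:ℝ) ^ (2:ℝ) := by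
        rw [show (2:ℝ) = ((2:ℕ):ℝ) by norm_num, Real.rpow_natCast]
        norm_num
      rw [h42, ← Real.rpow_natCast (2:ℝ) d, ← Real.rpow_mul (by norm_num : (0:ℝ) ≤ 2)]
      congr 1
      ring
    have e3 : Y ^ ((d : ℝ) / 2) * sY = Y ^ (((d : ℝ) + 1) / 2) := by
      rw [hsY, Real.sqrt_eq_rpow, ← Real.rpow_add hYpos]
      congr 1
      ring
    have hYr : (0:ℝ) < Y ^ ((d : ℝ) / 2) := Real.rpow_pos_of_pos hYpos _
    have h2d : ((2:ℝ) ^ d) ≠ 0 := by positivity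
    rw [e1, e2, e4, ← e3]
    field_simp
  rw [hset, himage, himg_vol, hscal]
  exact mul_comm _ _
end

section
/- Let d = 3, let P ∈ ℝ³ with P ≠ 0, and let μ₊, μ₋ ∈ (0,1) with μ₊ + μ₋ = 1. Define the ultra-relativistic pair kinetic symbol T_{P,0,μ±}(η) := |μ₊P − η| + |μ₋P + η| − |P|. Then T_{P,0,μ±}(η) ≥ 0 for all η, T_{P,0,μ±}(sP) = 0 for every s ∈ [−μ₋, μ₊], and for every s ∈ (−μ₋, μ₊) and every δ > 0 one has ∫_{B_δ(sP)} T_{P,0,μ±}(η)^{-1} dη = ∞. -/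
/-!
Nonnegativity is the triangle inequality, and on the segment `[-μ₋, μ₊] • P` the two vectors
`μ₊P - η`, `μ₋P + η` are positively collinear. Near an interior point `sP`, write
`η = τP + y` with `y ⊥ P`; both `(μ₊ - τ)P` and `(μ₋ + τ)P` then have length at least some
`c > 0`, so Pythagoras gives `T(η) ≤ ‖y‖² / c`. Thus `1/T` dominates `c/‖y‖²`, a function of
the two coordinates transverse to `P` alone, and `‖y‖⁻²` is not integrable at the origin of
the plane `P⊥`.
-/

open MeasureTheory Metric Module Topology RealInnerProductSpace
open scoped ENNReal

def pairSymbol {E : Type*} [NormedAddCommGroup E] [Module ℝ E] (μp μm : ℝ) (P η : E) : ℝ :=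
  ‖μp • P - η‖ + ‖μm • P + η‖ - ‖P‖

section NormedSpace

variable {E : Type*} [NormedAddCommGroup E] {μp μm : ℝ}

theorem pairSymbol_nonneg [Module ℝ E] (hsum : μp + μm = 1) (P η : E) :
    0 ≤ pairSymbol μp μm P η := by
  have h := norm_add_le (μp • P - η) (μm • P + η)
  rw [sub_add_add_cancel, ← add_smul, hsum, one_smul] at h
  exact sub_nonneg.mpr h

theorem pairSymbol_smul_self [NormedSpace ℝ E] (hsum : μp + μm = 1) (P : E) {s : ℝ}
    (hs : s ∈ Set.Icc (-μm) μp) : pairSymbol μp μm P (s • P) = 0 := by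
  rw [pairSymbol, ← sub_smul, ← add_smul, norm_smul, norm_smul,
    Real.norm_of_nonneg (by linarith [hs.2]), Real.norm_of_nonneg (by linarith [hs.1])]
  linear_combination ‖P‖ * hsum

end NormedSpace

section InnerProductSpace

variable {E : Type*} [NormedAddCommGroup E] [InnerProductSpace ℝ E] {μp μm : ℝ}

theorem norm_add_le_add_sq_div_of_inner_eq_zero {a y : E} (h : ⟪a, y⟫ = 0) {c : ℝ} (hc : 0 < c)
    (hca : c ≤ ‖a‖) : ‖a + y‖ ≤ ‖a‖ + ‖y‖ ^ 2 / (2 * c) := by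
  have hpyth : ‖a + y‖ ^ 2 = ‖a‖ ^ 2 + ‖y‖ ^ 2 := by
    rw [norm_add_sq_real, h]; ring
  have hy : ‖y‖ ^ 2 ≤ 2 * ‖a‖ * (‖y‖ ^ 2 / (2 * c)) := by
    rw [mul_div_assoc', le_div_iff₀ (by positivity)]
    nlinarith [sq_nonneg ‖y‖]
  refine le_of_pow_le_pow_left₀ two_ne_zero (by positivity) ?_
  nlinarith [sq_nonneg (‖y‖ ^ 2 / (2 * c))]

theorem pairSymbol_smul_add_le (hsum : μp + μm = 1) {P y : E} (hPy : ⟪P, y⟫ = 0) {τ c : ℝ}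
    (hc : 0 < c) (hcp : c ≤ (μp - τ) * ‖P‖) (hcm : c ≤ (μm + τ) * ‖P‖) :
    pairSymbol μp μm P (τ • P + y) ≤ ‖y‖ ^ 2 / c := by
  have norm_smul_P {t : ℝ} (ht : c ≤ t * ‖P‖) : ‖t • P‖ = t * ‖P‖ := by
    rw [norm_smul, Real.norm_of_nonneg]
    by_contra! h
    nlinarith [norm_nonneg P]
  have hp := norm_add_le_add_sq_div_of_inner_eq_zero (a := (μp - τ) • P) (y := -y)
    (by rw [inner_neg_right, real_inner_smul_left, hPy]; ring) hc (by rwa [norm_smul_P hcp])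
  have hm := norm_add_le_add_sq_div_of_inner_eq_zero (a := (μm + τ) • P) (y := y)
    (by rw [real_inner_smul_left, hPy]; ring) hc (by rwa [norm_smul_P hcm])
  rw [norm_smul_P hcp, norm_neg] at hp
  rw [norm_smul_P hcm] at hm
  have hsplit : ‖y‖ ^ 2 / c = ‖y‖ ^ 2 / (2 * c) + ‖y‖ ^ 2 / (2 * c) := by field_simp; ring
  rw [pairSymbol, hsplit,
    show μp • P - (τ • P + y) = (μp - τ) • P + -y by rw [sub_smul]; abel,
    show μm • P + (τ • P + y) = (μm + τ) • P + y by rw [add_smul]; abel]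
  linear_combination hp + hm + (norm P) * hsum

noncomputable def smulAddOrthogonalEquiv [FiniteDimensional ℝ E] (P : E) (hP : P ≠ 0) :
    (ℝ × (ℝ ∙ P)ᗮ) ≃L[ℝ] E :=
  (((LinearEquiv.toSpanNonzeroSingleton ℝ E P hP).prodCongr (LinearEquiv.refl ℝ _)).trans
    ((ℝ ∙ P).prodEquivOfIsCompl _ (ℝ ∙ P).isCompl_orthogonal)).toContinuousLinearEquiv

@[simp]
theorem smulAddOrthogonalEquiv_apply [FiniteDimensional ℝ E] (P : E) (hP : P ≠ 0)
    (p : ℝ × (ℝ ∙ P)ᗮ) :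
    smulAddOrthogonalEquiv P hP p = p.1 • P + p.2 := rfl

end InnerProductSpace

theorem lintegral_ball_inv_enorm_pow_finrank_eq_top {E : Type*} [NormedAddCommGroup E]
    [NormedSpace ℝ E] [FiniteDimensional ℝ E] [MeasurableSpace E] [BorelSpace E] [Nontrivial E]
    (μ : Measure E) [μ.IsAddHaarMeasure] {r : ℝ} (hr : 0 < r) :
    ∫⁻ x in ball 0 r, (‖x‖ₑ ^ finrank ℝ E)⁻¹ ∂μ = ⊤ := by
  set d := finrank ℝ E
  have hd : 0 < d := finrank_pos
  have h_not_int : ¬ IntegrableOn (fun x : E ↦ ‖x‖ ^ (-(d : ℝ))) (ball 0 r) μ := by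
    rw [integrableOn_fun_norm_addHaar μ (f := fun y ↦ y ^ (-(d : ℝ))),
      integrableOn_congr_fun (g := fun y ↦ y ^ (-1 : ℝ)) _ measurableSet_Ioo,
      intervalIntegral.integrableOn_Ioo_rpow_iff hr]
    · norm_num
    · intro y hy
      simp only [smul_eq_mul]
      rw [← Real.rpow_natCast, ← Real.rpow_add hy.1, Nat.cast_sub hd, Nat.cast_one]
      ring_nf
  rw [IntegrableOn, ← lintegral_ofReal_ne_top_iff_integrable (by measurability)
    (ae_of_all _ fun x ↦ by positivity), not_not] at h_not_int
  refine top_unique (h_not_int ▸ lintegral_mono fun x ↦ ?_)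
  rcases eq_or_ne x 0 with rfl | hx
  · simp [hd.ne']
  · rw [Real.rpow_neg (norm_nonneg x), Real.rpow_natCast,
      ENNReal.ofReal_inv_of_pos (by positivity), ENNReal.ofReal_pow (norm_nonneg x),
      ofReal_norm]

theorem lintegral_ball_inv_ofReal_norm_pow_finrank_div_eq_top {E : Type*} [NormedAddCommGroup E]
    [NormedSpace ℝ E] [FiniteDimensional ℝ E] [MeasurableSpace E] [BorelSpace E] [Nontrivial E]
    (μ : Measure E) [μ.IsAddHaarMeasure] {c r : ℝ} (hc : 0 < c) (hr : 0 < r) :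
    ∫⁻ x in ball 0 r, (ENNReal.ofReal (‖x‖ ^ finrank ℝ E / c))⁻¹ ∂μ = ⊤ := by
  have hc' : ENNReal.ofReal c ≠ 0 := (ENNReal.ofReal_pos.mpr hc).ne'
  have heq (x : E) : (ENNReal.ofReal (‖x‖ ^ finrank ℝ E / c))⁻¹ =
      ENNReal.ofReal c * (‖x‖ₑ ^ finrank ℝ E)⁻¹ := by
    rw [ENNReal.ofReal_div_of_pos hc, ENNReal.ofReal_pow (norm_nonneg _), ofReal_norm,
      ENNReal.inv_div (Or.inl ENNReal.ofReal_ne_top) (Or.inl hc'), div_eq_mul_inv]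
  simp_rw [heq]
  rw [lintegral_const_mul' _ _ ENNReal.ofReal_ne_top,
    lintegral_ball_inv_enorm_pow_finrank_eq_top μ hr, ENNReal.mul_top hc']

theorem lintegral_comp_snd_symm_eq_top {F G E : Type*}
    [NormedAddCommGroup F] [NormedSpace ℝ F] [FiniteDimensional ℝ F] [MeasurableSpace F]
    [BorelSpace F] [NormedAddCommGroup G] [NormedSpace ℝ G] [FiniteDimensional ℝ G]
    [MeasurableSpace G] [BorelSpace G] [NormedAddCommGroup E] [NormedSpace ℝ E]
    [MeasurableSpace E] [BorelSpace E]
    (μG : Measure G) [μG.IsAddHaarMeasure] (μ : Measure E) [μ.IsAddHaarMeasure]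
    (Φ : (F × G) ≃L[ℝ] E) {f : G → ℝ≥0∞} (hf : ∀ r > 0, ∫⁻ y in ball 0 r, f y ∂μG = ⊤)
    (x : F) {U : Set E} (hU : U ∈ 𝓝 (Φ (x, 0))) :
    ∫⁻ η in U, f (Φ.symm η).2 ∂μ = ⊤ := by
  obtain ⟨r, hr, hrU⟩ := Metric.mem_nhds_iff.mp (Φ.continuous.continuousAt.preimage_mem_nhds hU)
  set μF : Measure F := Measure.addHaar
  set e : E ≃ᵐ F × G := Φ.symm.toHomeomorph.toMeasurableEquiv
  have : (μ.map e).IsAddHaarMeasure := Φ.symm.isAddHaarMeasure_map μ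
  set c := (μ.map e).addHaarScalarFactor (μF.prod μG)
  have hc : c ≠ 0 := (Measure.addHaarScalarFactor_pos_of_isAddHaarMeasure _ _).ne'
  have hν : μ.map e = c • μF.prod μG := Measure.isAddLeftInvariant_eq_smul _ _
  have hball : 0 < μF (ball x r) := measure_ball_pos μF x hr
  refine top_unique ?_
  calc ⊤ = c • (μF (ball x r) • ∫⁻ y in ball 0 r, f y ∂μG) := by
        simp [hf r hr, hc, hball.ne', ENNReal.smul_top]
    _ = ∫⁻ y, f y ∂(((c • μF.prod μG).restrict (ball x r ×ˢ ball 0 r)).map Prod.snd) := by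
        rw [Measure.restrict_smul, ← Measure.prod_restrict, Measure.map_smul,
          Measure.map_snd_prod, lintegral_smul_measure, lintegral_smul_measure,
          Measure.restrict_apply_univ]
    _ ≤ ∫⁻ p in ball x r ×ˢ ball 0 r, f p.2 ∂(c • μF.prod μG) := lintegral_map_le _ _
    _ ≤ ∫⁻ p in Φ ⁻¹' U, f p.2 ∂(μ.map e) := by
        rw [hν]; exact lintegral_mono_set (by rwa [ball_prod_same])
    _ = ∫⁻ η in U, f (Φ.symm η).2 ∂μ := by
        rw [e.restrict_map, lintegral_map_equiv]
        congr 2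
        ext η
        simp [e]

theorem lintegral_inv_pairSymbol_eq_top {E : Type*} [NormedAddCommGroup E] [InnerProductSpace ℝ E]
    [FiniteDimensional ℝ E] [MeasurableSpace E] [BorelSpace E] (hE : finrank ℝ E = 3)
    (μ : Measure E) [μ.IsAddHaarMeasure] {μp μm : ℝ} (hsum : μp + μm = 1) {P : E} (hP : P ≠ 0)
    {s : ℝ} (hs : s ∈ Set.Ioo (-μm) μp) {U : Set E} (hU : U ∈ 𝓝 (s • P)) :
    ∫⁻ η in U, (ENNReal.ofReal (pairSymbol μp μm P η))⁻¹ ∂μ = ⊤ := by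
  obtain ⟨a, hma, has⟩ := exists_between hs.1
  obtain ⟨b, hsb, hbp⟩ := exists_between hs.2
  set Φ := smulAddOrthogonalEquiv P hP
  set c := min (μp - b) (μm + a) * ‖P‖
  have hc : 0 < c := mul_pos (lt_min (by linarith) (by linarith)) (norm_pos_iff.mpr hP)
  have hΦs : Φ (s, 0) = s • P := by simp [Φ]
  set V := U ∩ {η | (Φ.symm η).1 ∈ Set.Ioo a b}
  have hV : V ∈ 𝓝 (Φ (s, 0)) := by
    rw [hΦs]
    refine Filter.inter_mem hU (IsOpen.mem_nhds (isOpen_Ioo.preimage (by fun_prop)) ?_)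
    simp [← hΦs, has, hsb]
  have : Fact (finrank ℝ E = 2 + 1) := ⟨hE⟩
  have hK : finrank ℝ (ℝ ∙ P)ᗮ = 2 := Submodule.finrank_orthogonal_span_singleton hP
  have : Nontrivial (ℝ ∙ P)ᗮ := Module.nontrivial_of_finrank_pos (R := ℝ) (by omega)
  have hf : ∀ r > 0, ∫⁻ y in ball 0 r, (ENNReal.ofReal (‖y‖ ^ 2 / c))⁻¹
      ∂(Measure.addHaar : Measure (ℝ ∙ P)ᗮ) = ⊤ := fun r hr ↦ by
    simpa [hK] using lintegral_ball_inv_ofReal_norm_pow_finrank_div_eq_top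
      (E := (ℝ ∙ P)ᗮ) Measure.addHaar hc hr
  refine top_unique ?_
  calc ⊤ = ∫⁻ η in V, (ENNReal.ofReal (‖(Φ.symm η).2‖ ^ 2 / c))⁻¹ ∂μ :=
        (lintegral_comp_snd_symm_eq_top _ μ Φ hf s hV).symm
    _ ≤ ∫⁻ η in V, (ENNReal.ofReal (pairSymbol μp μm P η))⁻¹ ∂μ := by
        refine setLIntegral_mono (by unfold pairSymbol; fun_prop) fun η hηV ↦ ?_
        obtain ⟨haτ, hτb⟩ : (Φ.symm η).1 ∈ Set.Ioo a b := hηV.2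
        set p := Φ.symm η
        have hη : η = p.1 • P + p.2 := (Φ.apply_symm_apply η).symm
        refine ENNReal.inv_le_inv.mpr (ENNReal.ofReal_le_ofReal ?_)
        rw [hη]
        exact pairSymbol_smul_add_le hsum
          (Submodule.mem_orthogonal_singleton_iff_inner_right.mp p.2.2) hc
          (mul_le_mul_of_nonneg_right ((min_le_left _ _).trans (by linarith)) (norm_nonneg _))
          (mul_le_mul_of_nonneg_right ((min_le_right _ _).trans (by linarith)) (norm_nonneg _))
    _ ≤ ∫⁻ η in U, (ENNReal.ofReal (pairSymbol μp μm P η))⁻¹ ∂μ :=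
        lintegral_mono_set Set.inter_subset_left

theorem ultra_relativistic_pair_thick_zero_set_general
    (P : EuclideanSpace ℝ (Fin 3)) (hP : P ≠ 0)
    (μp μm : ℝ)
    (hsum : μp + μm = 1) :
    (∀ η : EuclideanSpace ℝ (Fin 3),
        0 ≤ ‖μp • P - η‖ + ‖μm • P + η‖ - ‖P‖) ∧
    (∀ s : ℝ, s ∈ Set.Icc (-μm) μp →
        ‖μp • P - s • P‖ + ‖μm • P + s • P‖ - ‖P‖ = 0) ∧
    (∀ s : ℝ, s ∈ Set.Ioo (-μm) μp → ∀ δ : ℝ, 0 < δ →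
        ∫⁻ η in Metric.ball (s • P) δ,
          (ENNReal.ofReal (‖μp • P - η‖ + ‖μm • P + η‖ - ‖P‖))⁻¹ = ⊤) :=
  ⟨pairSymbol_nonneg hsum P, fun _ hs ↦ pairSymbol_smul_self hsum P hs,
    fun _ hs _ hδ ↦ lintegral_inv_pairSymbol_eq_top finrank_euclideanSpace_fin volume hsum hP hs
      (ball_mem_nhds _ hδ)⟩

/-- The ultra-relativistic pair symbol `T_{P,0,μ±}(η) = |μ₊P − η| + |μ₋P + η| − |P|`
(in dimension 3, `P ≠ 0`) is nonnegative, vanishes on the segment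
`{sP : −μ₋ ≤ s ≤ μ₊}`, and has a thick zero set near every interior point of
this segment: `∫_{B_δ(sP)} T(η)⁻¹ dη = ∞` for all `δ > 0`. -/
theorem ultra_relativistic_pair_thick_zero_set
    (P : EuclideanSpace ℝ (Fin 3)) (hP : P ≠ 0)
    (μp μm : ℝ) (hμp : μp ∈ Set.Ioo (0:ℝ) 1) (hμm : μm ∈ Set.Ioo (0:ℝ) 1)
    (hsum : μp + μm = 1) :
    (∀ η : EuclideanSpace ℝ (Fin 3),
        0 ≤ ‖μp • P - η‖ + ‖μm • P + η‖ - ‖P‖) ∧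
    (∀ s : ℝ, s ∈ Set.Icc (-μm) μp →
        ‖μp • P - s • P‖ + ‖μm • P + s • P‖ - ‖P‖ = 0) ∧
    (∀ s : ℝ, s ∈ Set.Ioo (-μm) μp → ∀ δ : ℝ, 0 < δ →
        ∫⁻ η in Metric.ball (s • P) δ,
          (ENNReal.ofReal (‖μp • P - η‖ + ‖μm • P + η‖ - ‖P‖))⁻¹ = ⊤) :=
  ultra_relativistic_pair_thick_zero_set_general P hP μp μm hsum
end

section
/- Let d ≥ 2 be an integer, let μ > 0, and let ω ∈ ℝ^d with |ω| = √μ. Then for every δ > 0, ∫_{B_δ(ω)} | |η|² − μ |^{-1} dη = ∞, i.e., the zero-temperature BCS kinetic symbol η ↦ | |η|² − μ | has a thick zero set near every point of the sphere of radius √μ. -/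
/-!
Choose a coordinate `i` with `ω i ≠ 0` and write `η = (x, y)` with `x = η i`. For `y` close to
the other coordinates of `ω`, the slice `x ↦ x² + |y|² − μ` has a simple zero `r y` close to
`ω i`, so on that slice the integrand is comparable to `|x − r y|⁻¹`, which is not integrable
near `r y`. By Tonelli, integrating these infinite slice integrals over a set of `y` of positive
measure gives `∞`.
-/

open MeasureTheory Set Filter Topology Asymptotics

theorem setLIntegral_inv_enorm_sub_eq_top {s : Set ℝ} {p : ℝ} (hs : s ∈ 𝓝 p) :
    ∫⁻ x in s, ‖x - p‖ₑ⁻¹ = ⊤ := by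
  obtain ⟨ε, hε, hball⟩ := Metric.mem_nhds_iff.1 hs
  rw [Real.ball_eq_Ioo] at hball
  have hnot : ¬ IntegrableOn (fun x => (x - p)⁻¹) (Ioo p (p + ε)) := by
    rw [← intervalIntegrable_iff_integrableOn_Ioo_of_le (by linarith),
      intervalIntegrable_sub_inv_iff]
    simp [hε.ne', hε.le]
  refine top_le_iff.1 (le_trans ?_ (lintegral_mono_set
    ((Ioo_subset_Ioo_left (show p - ε ≤ p by linarith)).trans hball)))
  by_contra! h
  refine hnot ⟨by fun_prop, lt_of_le_of_lt (lintegral_mono fun x => ?_) h⟩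
  simpa only [enorm_eq_nnnorm, nnnorm_inv] using ENNReal.coe_inv_le

theorem Asymptotics.IsBigO.setLIntegral_inv_enorm_eq_top {E : Type*} [NormedAddCommGroup E]
    {f : ℝ → E} {p : ℝ} (hf : f =O[𝓝 p] (· - p)) {s : Set ℝ} (hs : s ∈ 𝓝 p) :
    ∫⁻ x in s, ‖f x‖ₑ⁻¹ = ⊤ := by
  obtain ⟨c, hc, hfc⟩ := hf.exists_pos
  obtain ⟨t, hts, hto, hpt⟩ := mem_nhds_iff.1 (inter_mem hs hfc.bound)
  have hle : ∀ x ∈ t, (ENNReal.ofReal c)⁻¹ * ‖x - p‖ₑ⁻¹ ≤ ‖f x‖ₑ⁻¹ := fun x hx => by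
    rw [← ENNReal.mul_inv (.inr enorm_ne_top) (.inl ENNReal.ofReal_ne_top), ENNReal.inv_le_inv,
      ← ofReal_norm, ← ofReal_norm, ← ENNReal.ofReal_mul hc.le]
    exact ENNReal.ofReal_le_ofReal (hts hx).2
  refine top_le_iff.1 ?_
  calc ⊤ = (ENNReal.ofReal c)⁻¹ * ∫⁻ x in t, ‖x - p‖ₑ⁻¹ := by
        rw [setLIntegral_inv_enorm_sub_eq_top (hto.mem_nhds hpt),
          ENNReal.mul_top (ENNReal.inv_ne_zero.2 ENNReal.ofReal_ne_top)]
    _ = ∫⁻ x in t, (ENNReal.ofReal c)⁻¹ * ‖x - p‖ₑ⁻¹ :=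
        (lintegral_const_mul' _ _ (ENNReal.inv_ne_top.2 (by simpa using hc))).symm
    _ ≤ ∫⁻ x in t, ‖f x‖ₑ⁻¹ := setLIntegral_mono' hto.measurableSet hle
    _ ≤ ∫⁻ x in s, ‖f x‖ₑ⁻¹ := lintegral_mono_set (hts.trans inter_subset_left)

theorem setLIntegral_prod_eq_top {α β : Type*} [MeasurableSpace α] [MeasurableSpace β]
    {μ : Measure α} {ν : Measure β} [SFinite μ] [SFinite ν] {g : α × β → ENNReal}
    (hg : Measurable g) {s : Set α} {t : Set β} (ht : MeasurableSet t) (hνt : ν t ≠ 0)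
    (h : ∀ y ∈ t, ∫⁻ x in s, g (x, y) ∂μ = ⊤) :
    ∫⁻ z in s ×ˢ t, g z ∂μ.prod ν = ⊤ := by
  rw [← Measure.prod_restrict, lintegral_prod_symm' g hg, setLIntegral_congr_fun ht h,
    setLIntegral_const, ENNReal.top_mul hνt]

theorem setLIntegral_inv_enorm_sq_add_sub_eq_top {F : Type*} [TopologicalSpace F]
    [MeasurableSpace F] [OpensMeasurableSpace F] {ν : Measure F} [SFinite ν]
    [ν.IsOpenPosMeasure] {q : F → ℝ} (hq : Continuous q) {w : ℝ} (hw : w ≠ 0) {b : F}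
    {U : Set (ℝ × F)} (hU : U ∈ 𝓝 (w, b)) :
    ∫⁻ z in U, ‖z.1 ^ 2 + q z.2 - (w ^ 2 + q b)‖ₑ⁻¹ ∂volume.prod ν = ⊤ := by
  obtain ⟨S, T, hSo, hwS, hTo, hbT, hST⟩ := mem_nhds_prod_iff'.1 hU
  set c := w ^ 2 + q b
  -- the root of `x ^ 2 + q y = c` on the same side of `0` as `w`
  set r : F → ℝ := fun y => w / |w| * √(c - q y)
  have hrb : r b = w := by
    simp [r, c, Real.sqrt_sq_eq_abs, div_mul_cancel₀ _ (abs_ne_zero.2 hw)]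
  have hr_sq : ∀ y, q y ≤ c → r y ^ 2 = c - q y := fun y hy => by
    rw [mul_pow, div_pow, sq_abs, div_self (pow_ne_zero 2 hw), one_mul,
      Real.sq_sqrt (sub_nonneg.2 hy)]
  set T' := T ∩ r ⁻¹' S ∩ {y | q y < c}
  have hT'o : IsOpen T' :=
    (hTo.inter (hSo.preimage (by fun_prop))).inter (isOpen_lt hq continuous_const)
  have hbT' : b ∈ T' :=
    ⟨⟨hbT, show r b ∈ S from hrb ▸ hwS⟩, lt_add_of_pos_left (q b) (by positivity)⟩
  have hinner : ∀ y ∈ T', ∫⁻ x in S, ‖x ^ 2 + q y - c‖ₑ⁻¹ = ⊤ := by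
    rintro y ⟨⟨-, hyS⟩, hyc⟩
    have hfactor : ∀ x, x ^ 2 + q y - c = x ^ 2 - r y ^ 2 := fun x => by
      rw [hr_sq y hyc.le]; ring
    simp_rw [hfactor]
    exact (hasDerivAt_pow 2 (r y)).isBigO_sub.setLIntegral_inv_enorm_eq_top (hSo.mem_nhds hyS)
  have hg : Measurable fun z : ℝ × F => ‖z.1 ^ 2 + q z.2 - c‖ₑ⁻¹ := by fun_prop
  refine top_le_iff.1 ?_
  rw [← setLIntegral_prod_eq_top hg hT'o.measurableSet (hT'o.measure_ne_zero ν ⟨b, hbT'⟩) hinner]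
  exact lintegral_mono_set
    ((prod_mono le_rfl (inter_subset_left.trans inter_subset_left)).trans hST)

theorem EuclideanSpace.setLIntegral_inv_enorm_norm_sq_sub_eq_top {n : ℕ}
    {ω : EuclideanSpace ℝ (Fin n)} (hω : ω ≠ 0) {U : Set (EuclideanSpace ℝ (Fin n))}
    (hU : U ∈ 𝓝 ω) : ∫⁻ η in U, ‖‖η‖ ^ 2 - ‖ω‖ ^ 2‖ₑ⁻¹ = ⊤ := by
  obtain ⟨i, hi⟩ : ∃ i, ω i ≠ 0 := by
    by_contra! h
    exact hω (by ext i; simp [h i])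
  obtain ⟨m, rfl⟩ := Nat.exists_eq_add_one_of_ne_zero i.pos.ne'
  set Ψ : ℝ × (Fin m → ℝ) ≃ᵐ EuclideanSpace ℝ (Fin (m + 1)) :=
    (MeasurableEquiv.piFinSuccAbove (fun _ => ℝ) i).symm.trans (MeasurableEquiv.toLp 2 _)
  have hΨ : ∀ z, Ψ z = WithLp.toLp 2 (i.insertNth z.1 z.2) := fun z => rfl
  have hΨmp : MeasurePreserving Ψ :=
    (PiLp.volume_preserving_toLp _).comp (volume_preserving_piFinSuccAbove _ i).symm
  have hΨc : Continuous Ψ :=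
    (PiLp.continuous_toLp 2 _).comp (continuous_fst.finInsertNth (A := fun _ => ℝ) i continuous_snd)
  have hnorm : ∀ z, ‖Ψ z‖ ^ 2 = z.1 ^ 2 + ∑ j, z.2 j ^ 2 := fun z => by
    rw [EuclideanSpace.norm_sq_eq, Fin.sum_univ_succAbove _ i]
    simp [hΨ]
  have hωΨ : Ψ (ω i, i.removeNth ω) = ω := by
    rw [hΨ, Fin.insertNth_self_removeNth]
  have hω2 : ‖ω‖ ^ 2 = ω i ^ 2 + ∑ j, i.removeNth ω j ^ 2 := by
    simpa only [hωΨ] using hnorm (ω i, i.removeNth ω)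
  rw [← hΨmp.setLIntegral_comp_preimage_emb Ψ.measurableEmbedding, hω2]
  simp_rw [hnorm]
  have hU' : Ψ ⁻¹' U ∈ 𝓝 (ω i, i.removeNth ω) :=
    hΨc.continuousAt.preimage_mem_nhds (by rwa [hωΨ])
  exact setLIntegral_inv_enorm_sq_add_sub_eq_top (q := fun y : Fin m → ℝ => ∑ j, y j ^ 2)
    (by fun_prop) hi hU'

theorem BCS_thick_zero_set_general
    (d : ℕ)
    (μ : ℝ) (hμ : 0 < μ)
    (ω : EuclideanSpace ℝ (Fin d)) (hω : ‖ω‖ = Real.sqrt μ) :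
    ∀ δ : ℝ, 0 < δ →
      ∫⁻ η in Metric.ball ω δ,
        (ENNReal.ofReal |‖η‖ ^ 2 - μ|)⁻¹ = ⊤ := by
  intro δ hδ
  have hω0 : ω ≠ 0 := by
    rintro rfl
    exact (Real.sqrt_pos.2 hμ).ne' (by simpa using hω.symm)
  have hμω : μ = ‖ω‖ ^ 2 := by rw [hω, Real.sq_sqrt hμ.le]
  simpa only [hμω, Real.enorm_eq_ofReal_abs] using
    EuclideanSpace.setLIntegral_inv_enorm_norm_sq_sub_eq_top hω0 (Metric.ball_mem_nhds ω hδ)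

/-- The zero-temperature BCS symbol `η ↦ ||η|² − μ|`, `μ > 0`, `d ≥ 2`, has a thick
zero set near every point `ω` of the sphere of radius `√μ`:
`∫_{B_δ(ω)} ||η|² − μ|⁻¹ dη = ∞` for every `δ > 0`. -/
theorem BCS_thick_zero_set
    (d : ℕ) (hd : 2 ≤ d)
    (μ : ℝ) (hμ : 0 < μ)
    (ω : EuclideanSpace ℝ (Fin d)) (hω : ‖ω‖ = Real.sqrt μ) :
    ∀ δ : ℝ, 0 < δ →
      ∫⁻ η in Metric.ball ω δ,
        (ENNReal.ofReal |‖η‖ ^ 2 - μ|)⁻¹ = ⊤ :=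
  BCS_thick_zero_set_general d μ hμ ω hω
end

section
/- Let d ≥ 3 be an integer and define the discrete Laplacian symbol T(η) := Σ_{j=1}^d 4 sin²(η_j/2) for η ∈ [−π, π]^d. Then for all u > 0 and α > 0, u ∫_{{η ∈ [−π,π]^d : T(η) < u/α²}} T(η)^{-1} dη/(2π)^d ≤ (|S^{d−1}| / (2^{2d}(d−2) α^{d−2})) · u · min(u, 4dα²)^{d/2 − 1}, where |S^{d−1}| denotes the surface measure of the unit sphere in ℝ^d. -/
/-!
On the cube `[-π, π]^d` Jordan's inequality `sin (x / 2) ≥ |x| / π` gives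
`T(η) ≥ (2 / π)² ‖η‖²`. Hence `T⁻¹ ≤ (π / 2)² ‖η‖⁻²`, and the sublevel set `{T < u / α²}`
lies in the ball of radius `R = (π / 2) √(min (u / α²) (4d))` (the `4d` because the cube has
`‖η‖² ≤ dπ²`). In polar coordinates `∫_{‖η‖ ≤ R} ‖η‖⁻² = d |B₁| R^(d-2) / (d - 2)` for `d ≥ 3`,
and the stated bound is exactly what this gives.
-/

open Set Metric MeasureTheory
open scoped ENNReal

namespace MeasureTheory

variable {E : Type*} [NormedAddCommGroup E] [NormedSpace ℝ E] [MeasurableSpace E] [BorelSpace E]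
  [FiniteDimensional ℝ E] (μ : Measure E) [μ.IsAddHaarMeasure]

local notation "dim" => Module.finrank ℝ

theorem lintegral_fun_norm_addHaar [Nontrivial E] {f : ℝ → ℝ≥0∞} (hf : Measurable f) :
    ∫⁻ x, f ‖x‖ ∂μ =
      dim E * μ (ball 0 1) * ∫⁻ y in Ioi (0 : ℝ), ENNReal.ofReal (y ^ (dim E - 1)) * f y :=
  calc
    ∫⁻ x, f ‖x‖ ∂μ = ∫⁻ x : ({(0)}ᶜ : Set E), f ‖x.1‖ ∂(μ.comap (↑)) := by
      rw [lintegral_subtype_comap (measurableSet_singleton _).compl fun x ↦ f ‖x‖,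
        restrict_compl_singleton]
    _ = ∫⁻ x : sphere (0 : E) 1 × Ioi (0 : ℝ), f x.2
        ∂μ.toSphere.prod (.volumeIoiPow (dim E - 1)) := by
      rw [← μ.measurePreserving_homeomorphUnitSphereProd.lintegral_comp_emb
        (Homeomorph.measurableEmbedding _) (fun p ↦ f p.2)]
      simp
    _ = μ.toSphere univ * ∫⁻ y : Ioi (0 : ℝ), f y ∂(.volumeIoiPow (dim E - 1)) := by
      rw [lintegral_prod_symm' (fun x : sphere (0 : E) 1 × Ioi (0 : ℝ) ↦ f x.2)
          (hf.comp (measurable_subtype_coe.comp measurable_snd))]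
      simp only [lintegral_const]
      rw [lintegral_mul_const _ (show Measurable fun y : Ioi (0 : ℝ) ↦ f y
          from hf.comp measurable_subtype_coe), mul_comm]
    _ = dim E * μ (ball 0 1) * ∫⁻ y : Ioi (0 : ℝ), ENNReal.ofReal (y.1 ^ (dim E - 1)) * f y
          ∂(.comap Subtype.val volume) := by
      rw [Measure.toSphere_apply_univ, Measure.volumeIoiPow,
        lintegral_withDensity_eq_lintegral_mul _ (by fun_prop)
          (show Measurable fun y : Ioi (0 : ℝ) ↦ f y from hf.comp measurable_subtype_coe)]
      rfl
    _ = _ := by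
      rw [lintegral_subtype_comap measurableSet_Ioi
        fun y ↦ ENNReal.ofReal (y ^ (dim E - 1)) * f y]

theorem lintegral_closedBall_inv_norm_pow {k : ℕ} (hk : k < dim E) {R : ℝ} (hR : 0 ≤ R) :
    ∫⁻ x in closedBall (0 : E) R, (ENNReal.ofReal (‖x‖ ^ k))⁻¹ ∂μ =
      ENNReal.ofReal (dim E * μ.real (ball 0 1) * R ^ (dim E - k) / (dim E - k : ℕ)) := by
  have : Nontrivial E := Module.nontrivial_of_finrank_pos (R := ℝ) (by omega)
  have hradial : ∀ y ∈ Ioi (0 : ℝ),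
      ENNReal.ofReal (y ^ (dim E - 1)) * (Iic R).indicator (fun y ↦ (ENNReal.ofReal (y ^ k))⁻¹) y =
        (Ioc 0 R).indicator (fun y ↦ ENNReal.ofReal (y ^ (dim E - k - 1))) y := by
    intro y (hy : 0 < y)
    by_cases hyR : y ≤ R
    · rw [indicator_of_mem (mem_Iic.mpr hyR), indicator_of_mem (show y ∈ Ioc 0 R from ⟨hy, hyR⟩),
        ← ENNReal.ofReal_inv_of_pos (by positivity), ← ENNReal.ofReal_mul (by positivity)]
      congr 1
      rw [show dim E - 1 = (dim E - k - 1) + k by omega, pow_add]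
      field_simp
    · simp [hyR]
  have hpow : ∫⁻ y in Ioc 0 R, ENNReal.ofReal (y ^ (dim E - k - 1)) =
      ENNReal.ofReal (R ^ (dim E - k) / (dim E - k : ℕ)) := by
    rw [← ofReal_integral_eq_lintegral_ofReal, ← intervalIntegral.integral_of_le hR, integral_pow,
      ← Nat.cast_add_one, show dim E - k - 1 + 1 = dim E - k by omega]
    · rw [zero_pow (show dim E - k ≠ 0 by omega), sub_zero]
    · exact (continuous_pow _).integrableOn_Icc.mono_set Ioc_subset_Icc_self
    · filter_upwards [ae_restrict_mem measurableSet_Ioc] with y hy using pow_nonneg hy.1.le _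
  calc ∫⁻ x in closedBall (0 : E) R, (ENNReal.ofReal (‖x‖ ^ k))⁻¹ ∂μ
      = ∫⁻ x, (Iic R).indicator (fun y ↦ (ENNReal.ofReal (y ^ k))⁻¹) ‖x‖ ∂μ := by
        rw [← lintegral_indicator measurableSet_closedBall]
        congr 1 with x
        simp [indicator, mem_closedBall]
    _ = dim E * μ (ball 0 1) * ∫⁻ y in Ioc 0 R, ENNReal.ofReal (y ^ (dim E - k - 1)) := by
        rw [lintegral_fun_norm_addHaar μ
            ((by fun_prop : Measurable fun y : ℝ ↦ (ENNReal.ofReal (y ^ k))⁻¹).indicator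
              measurableSet_Iic),
          setLIntegral_congr_fun measurableSet_Ioi hradial, lintegral_indicator measurableSet_Ioc,
          Measure.restrict_restrict measurableSet_Ioc, inter_eq_left.mpr Ioc_subset_Ioi_self]
    _ = _ := by
        rw [hpow, ← ENNReal.ofReal_natCast, ← ofReal_measureReal measure_ball_lt_top.ne,
          ← ENNReal.ofReal_mul (by positivity), ← ENNReal.ofReal_mul (by positivity),
          mul_div_assoc]

end MeasureTheory

open Real

theorem sq_div_pi_le_sin_half_sq {x : ℝ} (hx : |x| ≤ π) : (x / π) ^ 2 ≤ sin (x / 2) ^ 2 := by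
  have jordan : |x| / π ≤ sin (|x| / 2) := by
    have := mul_le_sin (x := |x| / 2) (by positivity) (by linarith)
    rwa [div_mul_div_comm, mul_comm 2 |x|, mul_div_mul_right _ _ two_ne_zero] at this
  have sin_abs : sin (|x| / 2) ^ 2 = sin (x / 2) ^ 2 := by
    rcases abs_choice x with h | h <;> simp [h, neg_div]
  calc (x / π) ^ 2 = (|x| / π) ^ 2 := by rw [div_pow, div_pow, sq_abs]
    _ ≤ sin (|x| / 2) ^ 2 := pow_le_pow_left₀ (by positivity) jordan 2
    _ = sin (x / 2) ^ 2 := sin_abs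

variable {ι : Type*} [Fintype ι]

noncomputable def discreteLaplacianSymbol (η : EuclideanSpace ℝ ι) : ℝ :=
  ∑ j, 4 * sin (η j / 2) ^ 2

variable (ι) in
noncomputable def discreteLaplacianSublevelSet (c : ℝ) : Set (EuclideanSpace ℝ ι) :=
  {η | (∀ j, η j ∈ Icc (-π) π) ∧ discreteLaplacianSymbol η < c}

theorem norm_sq_le_mul_discreteLaplacianSymbol {η : EuclideanSpace ℝ ι}
    (hη : ∀ j, η j ∈ Icc (-π) π) : ‖η‖ ^ 2 ≤ (π / 2) ^ 2 * discreteLaplacianSymbol η := by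
  rw [EuclideanSpace.norm_sq_eq, discreteLaplacianSymbol, Finset.mul_sum]
  refine Finset.sum_le_sum fun j _ ↦ ?_
  have h := sq_div_pi_le_sin_half_sq (abs_le.mpr (hη j))
  rw [div_pow, div_le_iff₀ (by positivity)] at h
  rw [Real.norm_eq_abs, sq_abs]
  linarith

theorem norm_sq_le_card_mul_pi_sq {η : EuclideanSpace ℝ ι} (hη : ∀ j, η j ∈ Icc (-π) π) :
    ‖η‖ ^ 2 ≤ Fintype.card ι * π ^ 2 := by
  rw [EuclideanSpace.norm_sq_eq, ← nsmul_eq_mul, ← Finset.card_univ, ← Finset.sum_const]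
  refine Finset.sum_le_sum fun j _ ↦ ?_
  rw [Real.norm_eq_abs, sq_abs]
  nlinarith [(hη j).1, (hη j).2]

theorem norm_le_of_mem_discreteLaplacianSublevelSet {η : EuclideanSpace ℝ ι} {c : ℝ}
    (hη : η ∈ discreteLaplacianSublevelSet ι c) :
    ‖η‖ ≤ π / 2 * √(min c (4 * Fintype.card ι)) := by
  obtain ⟨hcube, hc⟩ := hη
  have hsq : ‖η‖ ^ 2 ≤ (π / 2) ^ 2 * min c (4 * Fintype.card ι) := by
    rw [mul_min_of_nonneg _ _ (by positivity)]
    refine le_min ((norm_sq_le_mul_discreteLaplacianSymbol hcube).trans (by gcongr)) ?_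
    linarith [norm_sq_le_card_mul_pi_sq hcube]
  calc ‖η‖ = √(‖η‖ ^ 2) := (sqrt_sq (norm_nonneg _)).symm
    _ ≤ √((π / 2) ^ 2 * min c (4 * Fintype.card ι)) := sqrt_le_sqrt hsq
    _ = π / 2 * √(min c (4 * Fintype.card ι)) := by
      rw [sqrt_mul (by positivity), sqrt_sq (by positivity)]

theorem inv_discreteLaplacianSymbol_le {η : EuclideanSpace ℝ ι} (hη : ∀ j, η j ∈ Icc (-π) π) :
    (ENNReal.ofReal (discreteLaplacianSymbol η))⁻¹ ≤
      ENNReal.ofReal ((π / 2) ^ 2) * (ENNReal.ofReal (‖η‖ ^ 2))⁻¹ := by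
  have hπ : 0 < (π / 2) ^ 2 := by positivity
  calc (ENNReal.ofReal (discreteLaplacianSymbol η))⁻¹
      ≤ (ENNReal.ofReal (‖η‖ ^ 2 / (π / 2) ^ 2))⁻¹ := by
        gcongr
        exact (div_le_iff₀' hπ).2 (norm_sq_le_mul_discreteLaplacianSymbol hη)
    _ = ENNReal.ofReal ((π / 2) ^ 2) * (ENNReal.ofReal (‖η‖ ^ 2))⁻¹ := by
        rw [ENNReal.ofReal_div_of_pos hπ, ENNReal.inv_div (by simp) (by simp), div_eq_mul_inv]

theorem setLIntegral_inv_discreteLaplacianSymbol_le (hι : 3 ≤ Fintype.card ι) (c : ℝ) :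
    ∫⁻ η in discreteLaplacianSublevelSet ι c, (ENNReal.ofReal (discreteLaplacianSymbol η))⁻¹ ≤
      ENNReal.ofReal ((π / 2) ^ 2 *
        (Fintype.card ι * volume.real (ball (0 : EuclideanSpace ℝ ι) 1) *
          (π / 2 * √(min c (4 * Fintype.card ι))) ^ (Fintype.card ι - 2) /
            (Fintype.card ι - 2 : ℕ))) := by
  set R := π / 2 * √(min c (4 * Fintype.card ι))
  calc _ ≤ ∫⁻ η in discreteLaplacianSublevelSet ι c,
          ENNReal.ofReal ((π / 2) ^ 2) * (ENNReal.ofReal (‖η‖ ^ 2))⁻¹ :=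
        setLIntegral_mono (by fun_prop) fun η hη ↦ inv_discreteLaplacianSymbol_le hη.1
    _ ≤ ∫⁻ η in closedBall 0 R, ENNReal.ofReal ((π / 2) ^ 2) * (ENNReal.ofReal (‖η‖ ^ 2))⁻¹ :=
        lintegral_mono_set fun η hη ↦
          mem_closedBall_zero_iff.2 (norm_le_of_mem_discreteLaplacianSublevelSet hη)
    _ = _ := by
        rw [lintegral_const_mul _ (by fun_prop),
          lintegral_closedBall_inv_norm_pow volume (by rw [finrank_euclideanSpace]; omega)
            (by positivity), finrank_euclideanSpace, ← ENNReal.ofReal_mul (by positivity)]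

/-- For the discrete Laplacian symbol `T(η) = Σⱼ 4 sin²(ηⱼ/2)` on the cube `[−π,π]^d`,
`d ≥ 3`, and all `u, α > 0`:
`u ∫_{{T < u/α²}} T(η)⁻¹ dη/(2π)^d
  ≤ (|S^{d−1}|/(2^{2d}(d−2)α^{d−2})) u min(u, 4dα²)^{d/2−1}`,
where `|S^{d−1}| = d ⬝ |B₁^d|` is the surface measure of the unit sphere in `ℝ^d`. -/
theorem discrete_laplacian_G_bound
    (d : ℕ) (hd : 3 ≤ d)
    (u α : ℝ) (hu : 0 < u) (hα : 0 < α) :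
    ENNReal.ofReal u *
        (∫⁻ η in {η : EuclideanSpace ℝ (Fin d) |
            (∀ j, η j ∈ Set.Icc (-Real.pi) Real.pi) ∧
            (∑ j, 4 * Real.sin (η j / 2) ^ 2) < u / α ^ 2},
          (ENNReal.ofReal (∑ j, 4 * Real.sin (η j / 2) ^ 2))⁻¹)
        / ENNReal.ofReal ((2 * Real.pi) ^ d)
      ≤ ENNReal.ofReal
          ((d * (volume (Metric.ball (0 : EuclideanSpace ℝ (Fin d)) 1)).toReal)
              / (2 ^ (2 * d) * ((d : ℝ) - 2) * α ^ ((d : ℝ) - 2))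
            * (u * min u (4 * d * α ^ 2) ^ ((d : ℝ) / 2 - 1))) := by
  obtain ⟨m, rfl⟩ : ∃ m, d = m + 2 := ⟨d - 2, by omega⟩
  set r := min (u / α ^ 2) (4 * ((m + 2 : ℕ) : ℝ))
  have hr : 0 ≤ r := le_min (by positivity) (by positivity)
  have hsublevel :=
    setLIntegral_inv_discreteLaplacianSymbol_le (ι := Fin (m + 2)) (by simp; omega) (u / α ^ 2)
  simp only [Fintype.card_fin, Nat.add_sub_cancel] at hsublevel
  have hmin : min u (4 * ↑(m + 2) * α ^ 2) ^ ((↑(m + 2) : ℝ) / 2 - 1) = (α * √r) ^ m := by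
    rw [show min u (4 * ↑(m + 2) * α ^ 2) = (α * √r) ^ 2 by
        rw [mul_pow, sq_sqrt hr, mul_min_of_nonneg _ _ (by positivity)]; field_simp,
      show ((↑(m + 2) : ℝ) / 2 - 1) = (m : ℝ) / 2 by push_cast; ring,
      rpow_div_two_eq_sqrt _ (by positivity), sqrt_sq (by positivity), rpow_natCast]
  have hαm : α ^ ((↑(m + 2) : ℝ) - 2) = α ^ m := by
    rw [show ((↑(m + 2) : ℝ) - 2) = m by push_cast; ring, rpow_natCast]
  calc _ ≤ ENNReal.ofReal u * ENNReal.ofReal ((π / 2) ^ 2 * (↑(m + 2) *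
          volume.real (ball (0 : EuclideanSpace ℝ (Fin (m + 2))) 1) * (π / 2 * √r) ^ m / m)) /
          ENNReal.ofReal ((2 * π) ^ (m + 2)) := by
        gcongr
        exact hsublevel
    _ = _ := by
        rw [← ENNReal.ofReal_mul hu.le, ← ENNReal.ofReal_div_of_pos (by positivity), hmin, hαm,
          measureReal_def]
        congr 1
        simp only [mul_pow, div_pow]
        push_cast
        field_simp
        ring
end

section
/- Let d ≥ 1, let T : ℝ^d → [0,∞) be measurable, let ω ∈ ℝ^d be such that ∫_{B_δ(ω)} T(η)^{-1} dη = ∞ for every δ > 0, and let V ∈ L¹(ℝ^d; ℝ) satisfy ∫_{ℝ^d} V(x) dx < 0. Then there exists a measurable function ψ : ℝ^d → [0,∞) with ψ ∈ L¹(ℝ^d) ∩ L²(ℝ^d) and ψ not identically zero such that, with φ(x) := (2π)^{−d/2} ∫_{ℝ^d} e^{i x·η} ψ(η) dη, one has ∫_{ℝ^d} T(η) ψ(η)² dη + ∫_{ℝ^d} V(x) |φ(x)|² dx < 0. (This is the variational core of the existence of weakly coupled bound states for T(p) + V.) -/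
/-!
Take `ψ = 1_{B_δ(ω)} (T + c)⁻¹`. Then `T ψ² ≤ ψ`, so the kinetic energy is at most the mass
`M = ∫ ψ`, and by the thickness of the zero set of `T` at `ω` the mass tends to `∞` as `c → 0`.
Since `ψ ≥ 0` lives in `B_δ(ω)`, its plane-wave superposition has almost no cancellation for
`|x| ≤ R` once `R δ ≪ 1`: there `|φ|² ≥ (1 - R δ) (2π)^{-d} M²`, while `|φ|² ≤ (2π)^{-d} M²`
everywhere. With `R` chosen so that `V` has a small `L¹` tail outside `B_R(0)`, the potential
energy is at most `(2π)^{-d} M² ∫ V / 2 < 0`, quadratic in `M`, and it wins over the kinetic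
energy once `M` is large.
-/

open MeasureTheory Filter Topology Metric
open scoped ENNReal

section Tail

variable {E : Type*} [NormedAddCommGroup E] [MeasurableSpace E] [OpensMeasurableSpace E]
  {μ : Measure E}

theorem MeasureTheory.Integrable.tendsto_setIntegral_compl_closedBall {F : Type*}
    [NormedAddCommGroup F] [NormedSpace ℝ F] {f : E → F} (hf : Integrable f μ) (x₀ : E) :
    Tendsto (fun R : ℝ => ∫ x in (closedBall x₀ R)ᶜ, f x ∂μ) atTop (𝓝 0) := by
  have hempty : ⋂ R : ℝ, (closedBall x₀ R)ᶜ = ∅ := by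
    rw [← Set.compl_iUnion, Set.compl_empty_iff, Set.eq_univ_iff_forall]
    exact fun x => Set.mem_iUnion.2 ⟨dist x x₀, mem_closedBall.2 le_rfl⟩
  have h := tendsto_setIntegral_of_antitone (fun R => (measurableSet_closedBall (x := x₀)).compl)
    (fun R R' h => Set.compl_subset_compl.2 (closedBall_subset_closedBall h)) ⟨0, hf.integrableOn⟩
  rwa [hempty, Measure.restrict_empty, integral_zero_measure] at h

theorem MeasureTheory.Integrable.exists_mul_integral_abs_add_setIntegral_compl_le {V : E → ℝ}
    (hV : Integrable V μ) {ε : ℝ} (hε : 0 < ε) :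
    ∃ R δ : ℝ, 0 < R ∧ 0 < δ ∧ R * δ ≤ 1 ∧
      R * δ * ∫ x, |V x| ∂μ + ∫ x in (closedBall 0 R)ᶜ, |V x| ∂μ ≤ ε := by
  obtain ⟨R, htail, hR⟩ := ((hV.abs.tendsto_setIntegral_compl_closedBall 0).eventually
    (eventually_le_nhds (half_pos hε))).and (eventually_gt_atTop 0) |>.exists
  set A := ∫ x, |V x| ∂μ
  have hA : 0 ≤ A := integral_nonneg fun x => abs_nonneg (V x)
  set t := min 1 (ε / 2 / (A + 1))
  have htA : t * A ≤ ε / 2 :=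
    calc t * A ≤ ε / 2 / (A + 1) * (A + 1) := by
          gcongr
          exacts [min_le_right _ _, le_add_of_nonneg_right zero_le_one]
      _ = ε / 2 := by field_simp
  refine ⟨R, t / R, hR, div_pos (lt_min one_pos (by positivity)) hR, ?_, ?_⟩ <;>
    rw [mul_div_cancel₀ t hR.ne']
  · exact min_le_left _ _
  · linarith

end Tail

section TrialFunction

variable {α : Type*} {T : α → ℝ} {c : ℝ} {s : Set α}

theorem exists_lt_lintegral_ofReal_inv_add [MeasurableSpace α] {μ : Measure α}
    (hT : Measurable T) (hT0 : ∀ η, 0 ≤ T η)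
    (htop : ∫⁻ η, (ENNReal.ofReal (T η))⁻¹ ∂μ = ∞) {K : ℝ≥0∞} (hK : K ≠ ∞) :
    ∃ c > 0, K < ∫⁻ η, ENNReal.ofReal (T η + c)⁻¹ ∂μ := by
  have hconv : Tendsto (fun n : ℕ => ∫⁻ η, (ENNReal.ofReal (T η) + (n : ℝ≥0∞)⁻¹)⁻¹ ∂μ)
      atTop (𝓝 ∞) := by
    rw [← htop]
    refine lintegral_tendsto_of_tendsto_of_monotone
      (fun n => ((ENNReal.measurable_ofReal.comp hT).add_const _).inv.aemeasurable)
      (ae_of_all _ fun η m n hmn => ?_) (ae_of_all _ fun η => ?_)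
    · exact ENNReal.inv_le_inv.2 (add_le_add_right (ENNReal.inv_le_inv.2 (Nat.cast_le.2 hmn)) _)
    · simpa using (tendsto_const_nhds.add ENNReal.tendsto_inv_nat_nhds_zero).inv
  obtain ⟨n, hKn, hn⟩ := ((hconv.eventually (eventually_gt_nhds hK.lt_top)).and
    (eventually_gt_atTop 0)).exists
  refine ⟨(n : ℝ)⁻¹, by positivity, hKn.trans_eq (lintegral_congr fun η => ?_)⟩
  rw [ENNReal.ofReal_inv_of_pos (by have := hT0 η; positivity),
    ENNReal.ofReal_add (hT0 η) (by positivity), ENNReal.ofReal_inv_of_pos (by positivity),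
    ENNReal.ofReal_natCast]

noncomputable def trialFunction (T : α → ℝ) (c : ℝ) (s : Set α) : α → ℝ :=
  s.indicator fun η => (T η + c)⁻¹

theorem trialFunction_nonneg (hT0 : ∀ η, 0 ≤ T η) (hc : 0 < c) (η : α) :
    0 ≤ trialFunction T c s η :=
  Set.indicator_nonneg (fun η _ => inv_nonneg.2 (by linarith [hT0 η])) η

theorem trialFunction_le_inv (hT0 : ∀ η, 0 ≤ T η) (hc : 0 < c) (η : α) :
    trialFunction T c s η ≤ c⁻¹ := by
  unfold trialFunction
  by_cases hη : η ∈ s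
  · rw [Set.indicator_of_mem hη]
    exact inv_anti₀ hc (by linarith [hT0 η])
  · rw [Set.indicator_of_notMem hη]
    positivity

theorem mul_sq_trialFunction_le (hT0 : ∀ η, 0 ≤ T η) (hc : 0 < c) (η : α) :
    T η * trialFunction T c s η ^ 2 ≤ trialFunction T c s η := by
  unfold trialFunction
  by_cases hη : η ∈ s
  · have hpos : 0 < T η + c := by linarith [hT0 η]
    rw [Set.indicator_of_mem hη]
    calc T η * (T η + c)⁻¹ ^ 2 ≤ (T η + c) * (T η + c)⁻¹ ^ 2 := by
          gcongr; linarith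
      _ = (T η + c)⁻¹ := by field_simp
  · simp [Set.indicator_of_notMem hη]

theorem support_trialFunction_subset : Function.support (trialFunction T c s) ⊆ s :=
  Set.support_indicator_subset

variable [MeasurableSpace α] {μ : Measure α}

theorem measurable_trialFunction (hT : Measurable T) (hs : MeasurableSet s) :
    Measurable (trialFunction T c s) :=
  ((hT.add_const c).inv).indicator hs

theorem integrable_trialFunction (hT : Measurable T) (hT0 : ∀ η, 0 ≤ T η) (hc : 0 < c)
    (hs : MeasurableSet s) (hμs : μ s ≠ ∞) : Integrable (trialFunction T c s) μ := by
  refine (integrable_indicator_iff hs).2 (Measure.integrableOn_of_bounded hμs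
    (hT.add_const c).inv.aestronglyMeasurable (M := c⁻¹) (ae_of_all _ fun η => ?_))
  rw [Real.norm_of_nonneg (inv_nonneg.2 (by linarith [hT0 η]))]
  exact inv_anti₀ hc (by linarith [hT0 η])

theorem integrable_sq_trialFunction (hT : Measurable T) (hT0 : ∀ η, 0 ≤ T η) (hc : 0 < c)
    (hs : MeasurableSet s) (hμs : μ s ≠ ∞) :
    Integrable (fun η => trialFunction T c s η ^ 2) μ := by
  refine ((integrable_trialFunction hT hT0 hc hs hμs).mul_const c⁻¹).mono'
    ((measurable_trialFunction hT hs).pow_const 2).aestronglyMeasurable (ae_of_all _ fun η => ?_)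
  have h0 := trialFunction_nonneg (s := s) hT0 hc η
  rw [Real.norm_of_nonneg (by positivity), sq]
  exact mul_le_mul_of_nonneg_left (trialFunction_le_inv hT0 hc η) h0

theorem integrable_mul_sq_trialFunction (hT : Measurable T) (hT0 : ∀ η, 0 ≤ T η) (hc : 0 < c)
    (hs : MeasurableSet s) (hμs : μ s ≠ ∞) :
    Integrable (fun η => T η * trialFunction T c s η ^ 2) μ := by
  refine (integrable_trialFunction hT hT0 hc hs hμs).mono'
    (hT.mul ((measurable_trialFunction hT hs).pow_const 2)).aestronglyMeasurable
    (ae_of_all _ fun η => ?_)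
  rw [Real.norm_of_nonneg (mul_nonneg (hT0 η) (sq_nonneg _))]
  exact mul_sq_trialFunction_le hT0 hc η

theorem exists_lt_integral_trialFunction (hT : Measurable T) (hT0 : ∀ η, 0 ≤ T η)
    (hs : MeasurableSet s) (hμs : μ s ≠ ∞)
    (htop : ∫⁻ η in s, (ENNReal.ofReal (T η))⁻¹ ∂μ = ∞) (K : ℝ) :
    ∃ c > 0, K < ∫ η, trialFunction T c s η ∂μ := by
  obtain ⟨c, hc, hK⟩ := exists_lt_lintegral_ofReal_inv_add hT hT0 htop ENNReal.ofReal_ne_top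
  refine ⟨c, hc, ?_⟩
  have hint := (integrable_indicator_iff hs).1 (integrable_trialFunction (μ := μ) hT hT0 hc hs hμs)
  rw [← ofReal_integral_eq_lintegral_ofReal hint
    (ae_of_all _ fun η => inv_nonneg.2 (by linarith [hT0 η]))] at hK
  rw [trialFunction, integral_indicator hs]
  exact (ENNReal.ofReal_lt_ofReal_iff'.1 hK).1

end TrialFunction

section Potential

variable {α : Type*} [MeasurableSpace α] {μ : Measure α} {V W : α → ℝ} {S : Set α} {m a : ℝ}

theorem integrable_mul_of_nonneg_of_le (hV : Integrable V μ) (hW : AEStronglyMeasurable W μ)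
    (hW0 : ∀ x, 0 ≤ W x) (hWm : ∀ x, W x ≤ m) : Integrable (fun x => V x * W x) μ :=
  hV.mul_bdd hW (ae_of_all _ fun x => by rw [Real.norm_of_nonneg (hW0 x)]; exact hWm x)

/-- Pointwise, `V W = m V - V (m - W) ≤ m V + |V| (m - W)`, and `m - W` is at most `a m` on `S`
and at most `m` off `S`. -/
theorem integral_mul_le_of_ge_on (hS : MeasurableSet S) (hV : Integrable V μ)
    (hW : AEStronglyMeasurable W μ) (hW0 : ∀ x, 0 ≤ W x) (hWm : ∀ x, W x ≤ m) (ha : 0 ≤ a)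
    (hWS : ∀ x ∈ S, (1 - a) * m ≤ W x) :
    ∫ x, V x * W x ∂μ ≤
      m * ∫ x, V x ∂μ + a * m * ∫ x, |V x| ∂μ + m * ∫ x in Sᶜ, |V x| ∂μ := by
  have hpt : ∀ x, V x * W x ≤ m * V x + a * m * |V x| + m * Sᶜ.indicator (fun x => |V x|) x := by
    intro x
    have hV' : -V x * (m - W x) ≤ |V x| * (m - W x) :=
      mul_le_mul_of_nonneg_right (neg_le_abs _) (sub_nonneg.2 (hWm x))
    by_cases hx : x ∈ S
    · have hgap := mul_le_mul_of_nonneg_left (show m - W x ≤ a * m by linarith [hWS x hx])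
        (abs_nonneg (V x))
      rw [Set.indicator_of_notMem (Set.notMem_compl_iff.2 hx)]
      linarith
    · have hgap := mul_le_mul_of_nonneg_left (show m - W x ≤ m by linarith [hW0 x])
        (abs_nonneg (V x))
      have hm : 0 ≤ m := (hW0 x).trans (hWm x)
      have hslack : 0 ≤ a * m * |V x| := by positivity
      rw [Set.indicator_of_mem (Set.mem_compl hx)]
      linarith
  have h₁ : Integrable (fun x => m * V x) μ := hV.const_mul m
  have h₂ : Integrable (fun x => a * m * |V x|) μ := hV.abs.const_mul _
  have h₃ : Integrable (fun x => m * Sᶜ.indicator (fun x => |V x|) x) μ :=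
    (hV.abs.indicator hS.compl).const_mul m
  have h₁₂ : Integrable (fun x => m * V x + a * m * |V x|) μ := h₁.add h₂
  calc ∫ x, V x * W x ∂μ
      ≤ ∫ x, (m * V x + a * m * |V x| + m * Sᶜ.indicator (fun x => |V x|) x) ∂μ :=
        integral_mono (integrable_mul_of_nonneg_of_le hV hW hW0 hWm) (h₁₂.add h₃) hpt
    _ = _ := by
      rw [integral_add h₁₂ h₃, integral_add h₁ h₂, integral_const_mul, integral_const_mul,
        integral_const_mul, integral_indicator hS.compl]

end Potential

section PlaneWave

variable {E : Type*} [NormedAddCommGroup E] [InnerProductSpace ℝ E]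

theorem norm_exp_I_mul_inner_mul_ofReal (x η : E) (r : ℝ) :
    ‖Complex.exp (Complex.I * ((inner ℝ x η : ℝ) : ℂ)) * (r : ℂ)‖ = ‖r‖ := by
  rw [norm_mul, Complex.norm_exp_I_mul_ofReal, one_mul, Complex.norm_real]

variable [MeasurableSpace E] {ν : Measure E} {ψ : E → ℝ}

/-- The function `φ` of the theorem is `(2π)^{-d/2} * planeWaveIntegral volume ψ`. -/
noncomputable def planeWaveIntegral (ν : Measure E) (ψ : E → ℝ) (x : E) : ℂ :=
  ∫ η, Complex.exp (Complex.I * ((inner ℝ x η : ℝ) : ℂ)) * (ψ η : ℂ) ∂ν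

theorem norm_planeWaveIntegral_le (x : E) :
    ‖planeWaveIntegral ν ψ x‖ ≤ ∫ η, ‖ψ η‖ ∂ν :=
  (norm_integral_le_integral_norm _).trans_eq
    (integral_congr_ae (ae_of_all _ fun η => norm_exp_I_mul_inner_mul_ofReal x η (ψ η)))

variable [OpensMeasurableSpace E]

theorem aestronglyMeasurable_exp_I_mul_inner_mul (hψ : AEStronglyMeasurable ψ ν) (x : E) :
    AEStronglyMeasurable
      (fun η => Complex.exp (Complex.I * ((inner ℝ x η : ℝ) : ℂ)) * (ψ η : ℂ)) ν :=
  (by fun_prop : Continuous fun η : E => Complex.exp (Complex.I * ((inner ℝ x η : ℝ) : ℂ)))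
    |>.aestronglyMeasurable.mul (Complex.continuous_ofReal.comp_aestronglyMeasurable hψ)

theorem integrable_exp_I_mul_inner_mul (hψ : Integrable ψ ν) (x : E) :
    Integrable (fun η => Complex.exp (Complex.I * ((inner ℝ x η : ℝ) : ℂ)) * (ψ η : ℂ)) ν :=
  hψ.norm.mono' (aestronglyMeasurable_exp_I_mul_inner_mul hψ.1 x)
    (ae_of_all _ fun η => (norm_exp_I_mul_inner_mul_ofReal x η (ψ η)).le)

theorem continuous_planeWaveIntegral (hψ : Integrable ψ ν) :
    Continuous (planeWaveIntegral ν ψ) :=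
  continuous_of_dominated (fun x => aestronglyMeasurable_exp_I_mul_inner_mul hψ.1 x)
    (fun x => ae_of_all _ fun η => (norm_exp_I_mul_inner_mul_ofReal x η (ψ η)).le) hψ.norm
    (ae_of_all _ fun η => by fun_prop)

/-- After rotating by the phase `e^{-i⟪x, ω⟫}`, the real part of the integrand is
`cos ⟪x, η - ω⟫ * ψ η`, and `|⟪x, η - ω⟫| ≤ ‖x‖ δ` on the support of `ψ`. -/
theorem mul_integral_le_norm_planeWaveIntegral (hψ : Integrable ψ ν) (hψ0 : ∀ η, 0 ≤ ψ η)
    {ω : E} {δ : ℝ} (hsupp : Function.support ψ ⊆ ball ω δ) (x : E) :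
    (1 - (‖x‖ * δ) ^ 2 / 2) * ∫ η, ψ η ∂ν ≤ ‖planeWaveIntegral ν ψ x‖ := by
  set u : ℂ := Complex.exp (-(Complex.I * ((inner ℝ x ω : ℝ) : ℂ)))
  have hphase : ∀ η, (u * (Complex.exp (Complex.I * ((inner ℝ x η : ℝ) : ℂ)) * (ψ η : ℂ))).re
      = Real.cos (inner ℝ x (η - ω)) * ψ η := by
    intro η
    rw [← mul_assoc, ← Complex.exp_add, inner_sub_right, Complex.re_mul_ofReal,
      ← Complex.exp_ofReal_mul_I_re]
    push_cast
    ring_nf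
  have hcos : ∀ η, (1 - (‖x‖ * δ) ^ 2 / 2) * ψ η ≤ Real.cos (inner ℝ x (η - ω)) * ψ η := by
    intro η
    by_cases hη : η ∈ ball ω δ
    · refine mul_le_mul_of_nonneg_right (le_trans ?_ Real.one_sub_sq_div_two_le_cos) (hψ0 η)
      have habs : |inner ℝ x (η - ω)| ≤ ‖x‖ * δ :=
        (abs_real_inner_le_norm _ _).trans (by gcongr; exact (mem_ball_iff_norm.1 hη).le)
      have hsq : inner ℝ x (η - ω) ^ 2 ≤ (‖x‖ * δ) ^ 2 := by
        simpa only [sq_abs] using pow_le_pow_left₀ (abs_nonneg _) habs 2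
      linarith
    · simp [Function.notMem_support.1 fun h => hη (hsupp h)]
  calc (1 - (‖x‖ * δ) ^ 2 / 2) * ∫ η, ψ η ∂ν
      = ∫ η, (1 - (‖x‖ * δ) ^ 2 / 2) * ψ η ∂ν := (integral_const_mul _ _).symm
    _ ≤ ∫ η, Real.cos (inner ℝ x (η - ω)) * ψ η ∂ν := by
      refine integral_mono (hψ.const_mul _) ?_ hcos
      simpa only [RCLike.re_to_complex, hphase] using
        ((integrable_exp_I_mul_inner_mul hψ x).const_mul u).re
    _ = (u * planeWaveIntegral ν ψ x).re := by
      rw [planeWaveIntegral, ← integral_const_mul, ← RCLike.re_to_complex,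
        ← integral_re ((integrable_exp_I_mul_inner_mul hψ x).const_mul u)]
      simp only [RCLike.re_to_complex, hphase]
    _ ≤ ‖u * planeWaveIntegral ν ψ x‖ := Complex.re_le_norm _
    _ = ‖planeWaveIntegral ν ψ x‖ := by
      rw [norm_mul, Complex.norm_exp]
      simp

theorem integrable_mul_sq_norm_mul_planeWaveIntegral {μ : Measure E} {V : E → ℝ}
    (hV : Integrable V μ) (hψ : Integrable ψ ν) (z : ℂ) :
    Integrable (fun x => V x * ‖z * planeWaveIntegral ν ψ x‖ ^ 2) μ :=
  integrable_mul_of_nonneg_of_le (m := ‖z‖ ^ 2 * (∫ η, ‖ψ η‖ ∂ν) ^ 2) hV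
    ((continuous_const.mul (continuous_planeWaveIntegral hψ)).norm.pow 2).aestronglyMeasurable
    (fun x => by positivity)
    (fun x => by
      rw [norm_mul, mul_pow]
      gcongr
      exact norm_planeWaveIntegral_le x)

theorem integral_mul_sq_norm_mul_planeWaveIntegral_le {μ : Measure E} {V : E → ℝ}
    (hV : Integrable V μ) (hψ : Integrable ψ ν) (hψ0 : ∀ η, 0 ≤ ψ η) {ω : E} {δ R : ℝ}
    (hsupp : Function.support ψ ⊆ ball ω δ) (hδ : 0 ≤ δ) (hR : 0 ≤ R) (hRδ : R * δ ≤ 1)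
    (z : ℂ) :
    ∫ x, V x * ‖z * planeWaveIntegral ν ψ x‖ ^ 2 ∂μ ≤
      ‖z‖ ^ 2 * (∫ η, ψ η ∂ν) ^ 2 *
        (∫ x, V x ∂μ + R * δ * ∫ x, |V x| ∂μ + ∫ x in (closedBall 0 R)ᶜ, |V x| ∂μ) := by
  set M := ∫ η, ψ η ∂ν
  have hM0 : 0 ≤ M := integral_nonneg hψ0
  have hnorm : ∀ x, ‖z * planeWaveIntegral ν ψ x‖ ^ 2 = ‖z‖ ^ 2 * ‖planeWaveIntegral ν ψ x‖ ^ 2 :=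
    fun x => by rw [norm_mul, mul_pow]
  have hle : ∀ x, ‖planeWaveIntegral ν ψ x‖ ≤ M := fun x =>
    (norm_planeWaveIntegral_le x).trans_eq
      (integral_congr_ae (ae_of_all _ fun η => Real.norm_of_nonneg (hψ0 η)))
  have hge : ∀ x ∈ closedBall (0 : E) R, (1 - R * δ) * M ^ 2 ≤ ‖planeWaveIntegral ν ψ x‖ ^ 2 := by
    intro x hx
    have hs : ‖x‖ * δ ≤ R * δ := by gcongr; exact mem_closedBall_zero_iff.1 hx
    have hs0 : 0 ≤ ‖x‖ * δ := by positivity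
    have hs1 : ‖x‖ * δ ≤ 1 := hs.trans hRδ
    have hcoef : 1 - R * δ ≤ (1 - (‖x‖ * δ) ^ 2 / 2) ^ 2 := by nlinarith
    have hlow := mul_integral_le_norm_planeWaveIntegral hψ hψ0 hsupp x (ν := ν)
    calc (1 - R * δ) * M ^ 2 ≤ ((1 - (‖x‖ * δ) ^ 2 / 2) * M) ^ 2 := by
          rw [mul_pow]; gcongr
      _ ≤ ‖planeWaveIntegral ν ψ x‖ ^ 2 :=
          pow_le_pow_left₀ (mul_nonneg (by nlinarith) hM0) hlow 2
  refine (integral_mul_le_of_ge_on (W := fun x => ‖z * planeWaveIntegral ν ψ x‖ ^ 2)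
    (m := ‖z‖ ^ 2 * M ^ 2) (a := R * δ) measurableSet_closedBall hV
    ((continuous_const.mul (continuous_planeWaveIntegral hψ)).norm.pow 2).aestronglyMeasurable
    (fun x => by positivity) (fun x => ?_) (by positivity) (fun x hx => ?_)).trans_eq (by ring)
  · rw [hnorm]
    gcongr
    exact hle x
  · rw [hnorm, mul_left_comm]
    gcongr
    exact hge x hx

theorem integral_mul_sq_trialFunction_add_integral_le {μ ν : Measure E} {V T : E → ℝ} {c δ R : ℝ}
    {ω : E} (hV : Integrable V μ) (hT : Measurable T) (hT0 : ∀ η, 0 ≤ T η) (hc : 0 < c)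
    (hball : ν (ball ω δ) ≠ ∞) (hδ : 0 ≤ δ) (hR : 0 ≤ R) (hRδ : R * δ ≤ 1) (z : ℂ) :
    (∫ η, T η * trialFunction T c (ball ω δ) η ^ 2 ∂ν) +
        ∫ x, V x * ‖z * planeWaveIntegral ν (trialFunction T c (ball ω δ)) x‖ ^ 2 ∂μ ≤
      (∫ η, trialFunction T c (ball ω δ) η ∂ν) +
        ‖z‖ ^ 2 * (∫ η, trialFunction T c (ball ω δ) η ∂ν) ^ 2 *
          (∫ x, V x ∂μ + R * δ * ∫ x, |V x| ∂μ + ∫ x in (closedBall 0 R)ᶜ, |V x| ∂μ) := by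
  have hψ := integrable_trialFunction hT hT0 hc measurableSet_ball hball
  gcongr ?_ + ?_
  · exact integral_mono (integrable_mul_sq_trialFunction hT hT0 hc measurableSet_ball hball) hψ
      (mul_sq_trialFunction_le hT0 hc)
  · exact integral_mul_sq_norm_mul_planeWaveIntegral_le hV hψ (trialFunction_nonneg hT0 hc)
      support_trialFunction_subset hδ hR hRδ z

end PlaneWave

theorem weakly_coupled_bound_state_variational_core_general
    (d : ℕ)
    (T : EuclideanSpace ℝ (Fin d) → ℝ)
    (hT : Measurable T) (hT0 : ∀ η, 0 ≤ T η)
    (ω : EuclideanSpace ℝ (Fin d))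
    (hthick : ∀ δ : ℝ, 0 < δ →
      ∫⁻ η in Metric.ball ω δ, (ENNReal.ofReal (T η))⁻¹ = ⊤)
    (V : EuclideanSpace ℝ (Fin d) → ℝ)
    (hV : Integrable V) (hVneg : ∫ x, V x < 0) :
    ∃ ψ : EuclideanSpace ℝ (Fin d) → ℝ,
      Measurable ψ ∧ (∀ η, 0 ≤ ψ η) ∧
      Integrable ψ ∧ Integrable (fun η => ψ η ^ 2) ∧
      ψ ≠ 0 ∧
      Integrable (fun η => T η * ψ η ^ 2) ∧
      Integrable (fun x => V x *
        ‖(((2 * Real.pi) ^ (-(d : ℝ) / 2) : ℝ) : ℂ) *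
            ∫ η, Complex.exp (Complex.I * ((inner ℝ x η : ℝ) : ℂ)) * (ψ η : ℂ)‖ ^ 2) ∧
      (∫ η, T η * ψ η ^ 2) +
        (∫ x, V x *
          ‖(((2 * Real.pi) ^ (-(d : ℝ) / 2) : ℝ) : ℂ) *
              ∫ η, Complex.exp (Complex.I * ((inner ℝ x η : ℝ) : ℂ)) * (ψ η : ℂ)‖ ^ 2) < 0 := by
  set C : ℝ := (2 * Real.pi) ^ (-(d : ℝ) / 2)
  set I := -∫ x, V x with hI_def
  have hI : 0 < I := neg_pos.2 hVneg
  obtain ⟨R, δ, hR, hδ, hRδ, hsmall⟩ :=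
    hV.exists_mul_integral_abs_add_setIntegral_compl_le (half_pos hI)
  have hball := (measure_ball_lt_top (μ := volume) (x := ω) (r := δ)).ne
  obtain ⟨c, hc, hmass⟩ := exists_lt_integral_trialFunction hT hT0 measurableSet_ball hball
    (hthick δ hδ) (2 / (C ^ 2 * I))
  have hψ := integrable_trialFunction hT hT0 hc measurableSet_ball hball
  have henergy := integral_mul_sq_trialFunction_add_integral_le hV hT hT0 hc hball hδ.le hR.le
    hRδ (C : ℂ)
  rw [Complex.norm_real, Real.norm_of_nonneg (by positivity)] at henergy
  set M := ∫ η, trialFunction T c (ball ω δ) η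
  replace hmass : 2 / (C ^ 2 * I) < M := hmass
  have hM0 : 0 < M := (by positivity : (0 : ℝ) < 2 / (C ^ 2 * I)).trans hmass
  rw [div_lt_iff₀' (by positivity)] at hmass
  refine ⟨_, measurable_trialFunction hT measurableSet_ball, trialFunction_nonneg hT0 hc,
    hψ, integrable_sq_trialFunction hT hT0 hc measurableSet_ball hball, fun h => ?_,
    integrable_mul_sq_trialFunction hT hT0 hc measurableSet_ball hball,
    integrable_mul_sq_norm_mul_planeWaveIntegral hV hψ _, henergy.trans_lt ?_⟩
  · simp [M, h] at hM0
  · nlinarith [mul_le_mul_of_nonneg_left (by linarith : (∫ x, V x) + R * δ * (∫ x, |V x|) +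
      ∫ x in (closedBall 0 R)ᶜ, |V x| ≤ -(I / 2)) (by positivity : 0 ≤ C ^ 2 * M ^ 2),
      mul_lt_mul_of_pos_left hmass hM0]

/-- **Variational core of the existence of weakly coupled bound states.**
If `T` has a thick zero set near some `ω` and `V ∈ L¹` with `∫ V < 0`, then there is a
nonnegative `ψ ∈ L¹ ∩ L²`, not identically zero, such that — with
`φ(x) = (2π)^{-d/2} ∫ e^{i x·η} ψ(η) dη` — the total energy
`∫ T(η) ψ(η)² dη + ∫ V(x) |φ(x)|² dx` is strictly negative. -/
theorem weakly_coupled_bound_state_variational_core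
    (d : ℕ) (hd : 1 ≤ d)
    (T : EuclideanSpace ℝ (Fin d) → ℝ)
    (hT : Measurable T) (hT0 : ∀ η, 0 ≤ T η)
    (ω : EuclideanSpace ℝ (Fin d))
    (hthick : ∀ δ : ℝ, 0 < δ →
      ∫⁻ η in Metric.ball ω δ, (ENNReal.ofReal (T η))⁻¹ = ⊤)
    (V : EuclideanSpace ℝ (Fin d) → ℝ)
    (hV : Integrable V) (hVneg : ∫ x, V x < 0) :
    ∃ ψ : EuclideanSpace ℝ (Fin d) → ℝ,
      Measurable ψ ∧ (∀ η, 0 ≤ ψ η) ∧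
      Integrable ψ ∧ Integrable (fun η => ψ η ^ 2) ∧
      ψ ≠ 0 ∧
      Integrable (fun η => T η * ψ η ^ 2) ∧
      Integrable (fun x => V x *
        ‖(((2 * Real.pi) ^ (-(d : ℝ) / 2) : ℝ) : ℂ) *
            ∫ η, Complex.exp (Complex.I * ((inner ℝ x η : ℝ) : ℂ)) * (ψ η : ℂ)‖ ^ 2) ∧
      (∫ η, T η * ψ η ^ 2) +
        (∫ x, V x *
          ‖(((2 * Real.pi) ^ (-(d : ℝ) / 2) : ℝ) : ℂ) *
              ∫ η, Complex.exp (Complex.I * ((inner ℝ x η : ℝ) : ℂ)) * (ψ η : ℂ)‖ ^ 2) < 0 :=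
  weakly_coupled_bound_state_variational_core_general d T hT hT0 ω hthick V hV hVneg
end
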